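/- arXiv:1507.05206 — 5 statements merged into one kernel-verified Lean document; each statement's English description precedes it below -/
import Mathlib

section
/- In the complete bipartite graph K_{m,2} with parts X = {p,q} and Y of size m ≥ 3: g({q}) − g(∅) = 2(m+1) while g({p,q}) − g({p}) = m(m+1). Since m(m+1) > 2(m+1), the function g violates submodularity: with S = ∅ ⊆ T = {p} and q ∉ T, g(S ∪ {q}) − g(S) < g(T ∪ {q}) − g(T). -/
open SimpleGraph

/-- A shortest path from `s` to `t`, of length `ℓ = d(s,t)`, given by its vertices
`v 0, …, v ℓ`. -/
def IsShortestPath {W : Type*} (G : SimpleGraph W) (s t : W) (ℓ : ℕ) (v : ℕ → W) : Prop :=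
  v 0 = s ∧ v ℓ = t ∧ ℓ = G.dist s t ∧ ∀ i < ℓ, G.Adj (v i) (v (i + 1))

/-- `g(S)`: the number of ordered pairs `(s,t)` of distinct vertices such that every
shortest path from `s` to `t` contains a vertex of `S`. -/
noncomputable def numPairsCaptured {W : Type*} (G : SimpleGraph W) (S : Set W) : ℕ :=
  {p : W × W | p.1 ≠ p.2 ∧
    ∀ ℓ v, IsShortestPath G p.1 p.2 ℓ v → ∃ i ≤ ℓ, v i ∈ S}.ncard

/-- `g` for the complete bipartite graph `K_{m,2}`, with parts `Fin 2` (containing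
`p = Sum.inl 0` and `q = Sum.inl 1`) and `Fin m`. -/
noncomputable def gK (m : ℕ) (S : Set (Fin 2 ⊕ Fin m)) : ℕ :=
  numPairsCaptured (completeBipartiteGraph (Fin 2) (Fin m)) S

/-!
A pair of distinct vertices is captured by `S` when an endpoint lies in `S`, and escapes `S`
when some shortest path avoids it. In `K_{m,2}` two vertices of `Y ∪ {q}` are joined by an edge
or by a path through `q`, so `{p}` captures only the `2(m+1)` ordered pairs through `p`, while
`∅` captures nothing (the graph is connected) and the vertex cover `{p,q}` captures all
`(m+2)(m+1)` ordered pairs.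
-/

def Captures {W : Type*} (G : SimpleGraph W) (S : Set W) (s t : W) : Prop :=
  ∀ ℓ v, IsShortestPath G s t ℓ v → ∃ i ≤ ℓ, v i ∈ S

theorem numPairsCaptured_eq_ncard {W : Type*} (G : SimpleGraph W) (S : Set W) :
    numPairsCaptured G S = {p : W × W | p.1 ≠ p.2 ∧ Captures G S p.1 p.2}.ncard :=
  rfl

namespace SimpleGraph

variable {V : Type*} {G : SimpleGraph V}

theorem dist_eq_two_of_adj_of_adj {u v w : V} (huw : u ≠ w) (hn : ¬G.Adj u w)
    (huv : G.Adj u v) (hvw : G.Adj v w) : G.dist u w = 2 := by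
  have h : G.edist u w = 2 :=
    edist_eq_two_iff.mpr ⟨huw, hn, ⟨v, (mem_commonNeighbors G).mpr ⟨huv, hvw.symm⟩⟩⟩
  rw [← (huv.reachable.trans hvw.reachable).coe_dist_eq_edist] at h
  exact_mod_cast h

theorem completeBipartiteGraph_preconnected {α β : Type*} [Nonempty α] [Nonempty β] :
    (completeBipartiteGraph α β).Preconnected := by
  obtain ⟨a⟩ := ‹Nonempty α›
  obtain ⟨b⟩ := ‹Nonempty β›
  have reachable_inr : ∀ x, (completeBipartiteGraph α β).Reachable x (.inr b) := by
    rintro (a' | b')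
    · exact Adj.reachable (by simp)
    · exact (Adj.reachable (v := .inl a) (by simp)).trans (Adj.reachable (by simp))
  exact fun x y => (reachable_inr x).trans (reachable_inr y).symm

theorem completeBipartiteGraph_isVertexCover_range_inl {α β : Type*} :
    (completeBipartiteGraph α β).IsVertexCover (Set.range Sum.inl) := by
  rintro (a | b) (a' | b') h <;> simp at h ⊢

theorem Walk.isShortestPath_getVert {s t : V} (p : G.Walk s t) (hp : p.length = G.dist s t) :
    IsShortestPath G s t p.length p.getVert :=
  ⟨p.getVert_zero, p.getVert_length, hp, fun _ hi => p.adj_getVert_succ hi⟩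

end SimpleGraph

section Captures

variable {W : Type*} {G : SimpleGraph W} {S : Set W} {s t : W}

theorem captures_of_left_mem (hs : s ∈ S) : Captures G S s t :=
  fun _ _ hv => ⟨0, Nat.zero_le _, hv.1 ▸ hs⟩

theorem captures_of_right_mem (ht : t ∈ S) : Captures G S s t :=
  fun ℓ _ hv => ⟨ℓ, le_rfl, hv.2.1 ▸ ht⟩

theorem captures_of_neighborSet_subset (hst : s ≠ t) (hS : G.neighborSet s ⊆ S) :
    Captures G S s t := by
  rintro ℓ v ⟨h0, hℓ, -, hadj⟩
  have hpos : 0 < ℓ := Nat.pos_of_ne_zero (by rintro rfl; exact hst (h0.symm.trans hℓ))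
  exact ⟨1, hpos, hS (h0 ▸ hadj 0 hpos)⟩

theorem SimpleGraph.IsVertexCover.captures (hS : G.IsVertexCover S) (hst : s ≠ t) :
    Captures G S s t := by
  by_cases hs : s ∈ S
  · exact captures_of_left_mem hs
  · exact captures_of_neighborSet_subset hst fun _ hw => (hS hw).resolve_left hs

theorem not_captures_of_walk (p : G.Walk s t) (hp : p.length = G.dist s t)
    (hS : ∀ x ∈ p.support, x ∉ S) : ¬Captures G S s t := fun h => by
  obtain ⟨i, -, hi⟩ := h _ _ (p.isShortestPath_getVert hp)
  exact hS _ (p.getVert_mem_support i) hi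

theorem not_captures_of_adj (h : G.Adj s t) (hs : s ∉ S) (ht : t ∉ S) : ¬Captures G S s t :=
  not_captures_of_walk h.toWalk (by simp [dist_eq_one_iff_adj.mpr h]) (by simp [hs, ht])

theorem not_captures_of_adj_of_adj {w : W} (hst : s ≠ t) (hn : ¬G.Adj s t) (hsw : G.Adj s w)
    (hwt : G.Adj w t) (hs : s ∉ S) (hw : w ∉ S) (ht : t ∉ S) : ¬Captures G S s t :=
  not_captures_of_walk (.cons hsw (.cons hwt .nil))
    (by simp [dist_eq_two_of_adj_of_adj hst hn hsw hwt]) (by simp [hs, hw, ht])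

theorem not_captures_empty (h : G.Reachable s t) : ¬Captures G ∅ s t := by
  obtain ⟨p, hp⟩ := h.exists_walk_length_eq_dist
  exact not_captures_of_walk p hp (by simp)

theorem numPairsCaptured_empty (hG : G.Preconnected) : numPairsCaptured G ∅ = 0 := by
  rw [numPairsCaptured_eq_ncard, ← Set.ncard_empty (W × W)]
  congr 1
  ext
  simpa using fun _ => not_captures_empty (hG _ _)

end Captures

section Counting

variable {W : Type*} [Fintype W]

theorem numPairsCaptured_add_ncard_not_captures (G : SimpleGraph W) (S : Set W) :
    numPairsCaptured G S + {p : W × W | p.1 ≠ p.2 ∧ ¬Captures G S p.1 p.2}.ncard =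
      Fintype.card W * (Fintype.card W - 1) := by
  classical
  have h := Set.ncard_inter_add_ncard_sdiff_eq_ncard
    ((Finset.univ.offDiag : Finset (W × W)) : Set (W × W)) {p | Captures G S p.1 p.2}
  rw [Set.ncard_coe_finset, Finset.offDiag_card, Finset.card_univ, ← Nat.mul_sub_one] at h
  rw [← h, numPairsCaptured_eq_ncard]
  congr 2 <;> ext <;> simp

theorem numPairsCaptured_of_isVertexCover {G : SimpleGraph W} {S : Set W} (hS : G.IsVertexCover S) :
    numPairsCaptured G S = Fintype.card W * (Fintype.card W - 1) := by
  have h := numPairsCaptured_add_ncard_not_captures G S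
  have hall : {p : W × W | p.1 ≠ p.2 ∧ ¬Captures G S p.1 p.2} = ∅ := by
    ext
    simpa using fun hne => hS.captures hne
  rwa [hall, Set.ncard_empty, add_zero] at h

end Counting

theorem captures_singleton_inl_iff {β : Type*} (c : Fin 2) {x y : Fin 2 ⊕ β} (hxy : x ≠ y) :
    Captures (completeBipartiteGraph (Fin 2) β) {.inl c} x y ↔ x = .inl c ∨ y = .inl c := by
  constructor
  · intro h
    by_contra! hne
    rcases x with a | a <;> rcases y with b | b
    · simp only [ne_eq, Sum.inl.injEq] at hxy hne
      omega
    · exact not_captures_of_adj (by simp) (by simpa using hne.1) (by simp) h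
    · exact not_captures_of_adj (by simp) (by simp) (by simpa using hne.2) h
    · obtain ⟨c', hc'⟩ := exists_ne c
      exact not_captures_of_adj_of_adj (w := .inl c') hxy (by simp) (by simp) (by simp)
        (by simp) (by simpa using hc') (by simp) h
  · rintro (rfl | rfl)
    exacts [captures_of_left_mem rfl, captures_of_right_mem rfl]

theorem gK_empty {m : ℕ} (hm : 0 < m) : gK m ∅ = 0 :=
  have : Nonempty (Fin m) := ⟨⟨0, hm⟩⟩
  numPairsCaptured_empty completeBipartiteGraph_preconnected

theorem gK_pair (m : ℕ) : gK m {Sum.inl 0, Sum.inl 1} = (m + 2) * (m + 1) := by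
  have hS : ({.inl 0, .inl 1} : Set (Fin 2 ⊕ Fin m)) = Set.range Sum.inl := by
    ext (a | a)
    · fin_cases a <;> simp
    · simp
  rw [gK, hS, numPairsCaptured_of_isVertexCover completeBipartiteGraph_isVertexCover_range_inl]
  simp [add_comm]

theorem gK_singleton (m : ℕ) (c : Fin 2) : gK m {Sum.inl c} = 2 * (m + 1) := by
  have h := numPairsCaptured_add_ncard_not_captures (completeBipartiteGraph (Fin 2) (Fin m))
    {.inl c}
  have hnot : {p : (Fin 2 ⊕ Fin m) × (Fin 2 ⊕ Fin m) | p.1 ≠ p.2 ∧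
      ¬Captures (completeBipartiteGraph (Fin 2) (Fin m)) {Sum.inl c} p.1 p.2} =
      (({Sum.inl c}ᶜ : Finset (Fin 2 ⊕ Fin m)).offDiag : Set _) := by
    ext ⟨x, y⟩
    by_cases hxy : x = y
    · simp [hxy]
    · simp [hxy, captures_singleton_inl_iff c hxy, not_or]
  rw [hnot, Set.ncard_coe_finset, Finset.offDiag_card, ← Nat.mul_sub_one, Finset.card_compl]
    at h
  simp only [Fintype.card_sum, Fintype.card_fin, Finset.card_singleton, Nat.succ_add_sub_one,
    add_tsub_cancel_left] at h
  rw [gK]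
  linarith

/-- In `K_{m,2}` with parts `{p,q}` and `Y` of size `m ≥ 3`:
`g({q}) - g(∅) = 2(m+1)` while `g({p,q}) - g({p}) = m(m+1)`, and since
`m(m+1) > 2(m+1)`, `g` violates submodularity (with `S = ∅ ⊆ T = {p}` and `q ∉ T`). -/
theorem g_not_submodular (m : ℕ) (hm : 3 ≤ m) :
    gK m {Sum.inl 1} - gK m ∅ = 2 * (m + 1) ∧
      gK m {Sum.inl 0, Sum.inl 1} - gK m {Sum.inl 0} = m * (m + 1) ∧
      gK m {Sum.inl 1} - gK m ∅ <
        gK m {Sum.inl 0, Sum.inl 1} - gK m {Sum.inl 0} := by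
  have hsplit : (m + 2) * (m + 1) = m * (m + 1) + 2 * (m + 1) := by ring
  rw [gK_empty (by omega), gK_pair, gK_singleton, gK_singleton, hsplit, Nat.add_sub_cancel,
    Nat.sub_zero]
  exact ⟨rfl, rfl, Nat.mul_lt_mul_of_pos_right (by omega) (by omega)⟩
end

section
/- Let G be a finite connected D-regular simple graph (D ≥ 1) and C ⊆ V a set of colluding agents no two of which are adjacent. Let G' be obtained from G by subdividing each edge e = (u,v) with u ∈ C by a new vertex w_e, and let C' = C ∪ {w_e : e an edge incident to C}, so G' has |V| + |C|D vertices, of which |C|D are new. Then for every integer m, there exists an admissible nonuniform broadcast γ for (G, C) with N(C,γ) ≥ m if and only if there exists an admissible (uniform) broadcast β for (G', C') with N(C',β) ≥ m + |C|D(|C|D − 1) + 2|C|D|V|. -/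
/-!
In the subdivided graph the colluder `c` is heard by its neighbor `u` only through the
subdivision vertex `w` of the edge `cu`, so a uniform broadcast of `w` is the same thing as the
nonuniform message of `c` to `u`. If `β(w, j) = γ(c, u, j)` for all honest targets `j`, then
the old honest vertices compute the same perceived distances in both graphs (perceived
distances settle after `|V|` rounds, so the larger vertex count of `G'` does not matter), make
the same forwarding choices, and have the same corresponding paths, a hop through `c` becoming
a detour through a subdivision vertex. Towards every other target, which is a colluder, the
colluders can tell the truth, and then honest agents forward along shortest paths, so
admissibility is preserved. Finally every pair with an endpoint in `C'` is captured, so the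
uncaptured pairs of `G'` are those of `G`; with `n = |V|` and `M = |C| D` new vertices, the
ordered pairs of distinct vertices of `G'` that are not pairs of `G` number
`(n + M)(n + M - 1) - n(n - 1) = M(M - 1) + 2Mn`.
-/

open SimpleGraph

namespace Intercept

variable {V : Type*}

/-- The perceived-distance vectors after `s` rounds of the synchronization protocol.
Colluding agents (members of `C`) always broadcast `β`; honest agents start with
`0`/`∞` and update by the distance-vector rule. -/
noncomputable def perceived [Fintype V] [DecidableEq V] (G : SimpleGraph V)
    (C : Finset V) (β : V → V → ℕ∞) : ℕ → V → V → ℕ∞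
  | 0 => fun i j => if i ∈ C then β i j else if i = j then 0 else ⊤
  | s + 1 => fun i j =>
      if i ∈ C then β i j
      else min (perceived G C β s i j)
        (1 + ⨅ k ∈ G.neighborSet i, perceived G C β s k j)

/-- The stationary perceived distances `ρ = ρ^n`. -/
noncomputable def rho [Fintype V] [DecidableEq V] (G : SimpleGraph V)
    (C : Finset V) (β : V → V → ℕ∞) : V → V → ℕ∞ :=
  perceived G C β (Fintype.card V)

/-- `k ∈ b(i,t)`:  `k` is a neighbor of `i` minimizing the (stationary) perceived
distance `ρ(·,t)` among all neighbors of `i`; only defined (satisfiable) for `i ≠ t`. -/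
def inForwardSet (G : SimpleGraph V) (ρ : V → V → ℕ∞) (i t k : V) : Prop :=
  i ≠ t ∧ G.Adj i k ∧ ∀ k', G.Adj i k' → ρ k t ≤ ρ k' t

/-- A corresponding path from `s` to `t`: a walk in `G` such that every honest vertex
forwards to a member of its forwarding set `b(·,t)`. -/
def IsCorrPath [Fintype V] [DecidableEq V] (G : SimpleGraph V) (C : Finset V)
    (β : V → V → ℕ∞) (s t : V) (ℓ : ℕ) (v : ℕ → V) : Prop :=
  v 0 = s ∧ v ℓ = t ∧ (∀ i < ℓ, G.Adj (v i) (v (i + 1))) ∧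
    ∀ i < ℓ, v i ∉ C → inForwardSet G (rho G C β) (v i) t (v (i + 1))

/-- A broadcast is admissible if between every ordered pair of distinct vertices
there is a corresponding path. -/
def Admissible [Fintype V] [DecidableEq V] (G : SimpleGraph V) (C : Finset V)
    (β : V → V → ℕ∞) : Prop :=
  ∀ s t : V, s ≠ t → ∃ ℓ v, IsCorrPath G C β s t ℓ v

/-- The pair `(s,t)` is captured if every corresponding path from `s` to `t`
contains a colluding vertex. -/
def Captured [Fintype V] [DecidableEq V] (G : SimpleGraph V) (C : Finset V)
    (β : V → V → ℕ∞) (s t : V) : Prop :=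
  ∀ ℓ v, IsCorrPath G C β s t ℓ v → ∃ i ≤ ℓ, v i ∈ C

/-- `N(C,β)`: the number of captured ordered pairs of distinct vertices. -/
noncomputable def numCaptured [Fintype V] [DecidableEq V] (G : SimpleGraph V)
    (C : Finset V) (β : V → V → ℕ∞) : ℕ :=
  Set.ncard {p : V × V | p.1 ≠ p.2 ∧ Captured G C β p.1 p.2}

/-! ### The nonuniform broadcast model -/

/-- Perceived distances of honest agents in the nonuniform model: the update for an
honest agent `i` uses, for each colluding neighbor `k`, the value `γ k i j` that `k`
broadcasts specifically to `i`. -/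
noncomputable def perceivedNU [Fintype V] [DecidableEq V] (G : SimpleGraph V)
    (C : Finset V) (γ : V → V → V → ℕ∞) : ℕ → V → V → ℕ∞
  | 0 => fun i j => if i = j then 0 else ⊤
  | s + 1 => fun i j =>
      min (perceivedNU G C γ s i j)
        (1 + ⨅ k ∈ G.neighborSet i,
          (if k ∈ C then γ k i j else perceivedNU G C γ s k j))

/-- Stationary perceived distances in the nonuniform model. -/
noncomputable def rhoNU [Fintype V] [DecidableEq V] (G : SimpleGraph V)
    (C : Finset V) (γ : V → V → V → ℕ∞) : V → V → ℕ∞ :=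
  perceivedNU G C γ (Fintype.card V)

/-- `k ∈ b(i,t)` in the nonuniform model: `k` is a neighbor of honest `i` minimizing
the value broadcast to `i` (which is `γ k i t` for colluding `k`, and the stationary
perceived distance for honest `k`). -/
def inForwardSetNU [Fintype V] [DecidableEq V] (G : SimpleGraph V) (C : Finset V)
    (γ : V → V → V → ℕ∞) (i t k : V) : Prop :=
  i ≠ t ∧ G.Adj i k ∧ ∀ k', G.Adj i k' →
    (if k ∈ C then γ k i t else rhoNU G C γ k t) ≤
      (if k' ∈ C then γ k' i t else rhoNU G C γ k' t)

/-- Corresponding paths in the nonuniform model. -/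
def IsCorrPathNU [Fintype V] [DecidableEq V] (G : SimpleGraph V) (C : Finset V)
    (γ : V → V → V → ℕ∞) (s t : V) (ℓ : ℕ) (v : ℕ → V) : Prop :=
  v 0 = s ∧ v ℓ = t ∧ (∀ i < ℓ, G.Adj (v i) (v (i + 1))) ∧
    ∀ i < ℓ, v i ∉ C → inForwardSetNU G C γ (v i) t (v (i + 1))

/-- Admissibility in the nonuniform model. -/
def AdmissibleNU [Fintype V] [DecidableEq V] (G : SimpleGraph V) (C : Finset V)
    (γ : V → V → V → ℕ∞) : Prop :=
  ∀ s t : V, s ≠ t → ∃ ℓ v, IsCorrPathNU G C γ s t ℓ v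

/-- Capture in the nonuniform model. -/
def CapturedNU [Fintype V] [DecidableEq V] (G : SimpleGraph V) (C : Finset V)
    (γ : V → V → V → ℕ∞) (s t : V) : Prop :=
  ∀ ℓ v, IsCorrPathNU G C γ s t ℓ v → ∃ i ≤ ℓ, v i ∈ C

/-- `N(C,γ)` in the nonuniform model. -/
noncomputable def numCapturedNU [Fintype V] [DecidableEq V] (G : SimpleGraph V)
    (C : Finset V) (γ : V → V → V → ℕ∞) : ℕ :=
  Set.ncard {p : V × V | p.1 ≠ p.2 ∧ CapturedNU G C γ p.1 p.2}

/-! ### The subdivided graph `G'` -/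

/-- The vertex type of the subdivided graph `G'`: the old vertices together with one
new vertex for each edge `(c,u)` of `G` with `c ∈ C` (since `C` is an independent
set, each edge incident to `C` has exactly one endpoint in `C`). -/
abbrev SubdivVert [DecidableEq V] (G : SimpleGraph V) [DecidableRel G.Adj]
    (C : Finset V) : Type _ :=
  V ⊕ {p : V × V // p.1 ∈ C ∧ G.Adj p.1 p.2}

/-- The subdivided graph `G'`, obtained from `G` by subdividing each edge incident to
`C` with a new vertex. -/
def subdivGraph [DecidableEq V] (G : SimpleGraph V) [DecidableRel G.Adj]
    (C : Finset V) : SimpleGraph (SubdivVert G C) where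
  Adj a b :=
    match a, b with
    | Sum.inl u, Sum.inl w => G.Adj u w ∧ u ∉ C ∧ w ∉ C
    | Sum.inl u, Sum.inr e => u = e.1.1 ∨ u = e.1.2
    | Sum.inr e, Sum.inl u => u = e.1.1 ∨ u = e.1.2
    | Sum.inr _, Sum.inr _ => False
  symm := by
    constructor
    rintro (u | e) (w | f) h
    · exact ⟨h.1.symm, h.2.2, h.2.1⟩
    · exact h
    · exact h
    · exact h.elim
  loopless := by
    constructor
    rintro (u | e) h
    · exact G.irrefl h.1
    · exact h

/-- The colluding set `C'` in the subdivided graph: the old colluders together with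
all the new subdivision vertices. -/
def subdivColluders [Fintype V] [DecidableEq V] (G : SimpleGraph V)
    [DecidableRel G.Adj] (C : Finset V) : Finset (SubdivVert G C) :=
  C.map ⟨Sum.inl, Sum.inl_injective⟩ ∪ Finset.univ.map ⟨Sum.inr, Sum.inr_injective⟩

open Relation

section Nonuniform

variable [Fintype V] [DecidableEq V] (G : SimpleGraph V) (C : Finset V) (γ : V → V → V → ℕ∞)

/-- The term contributed by the neighbor `k` to the update of `i` in `perceivedNU`. -/
noncomputable def heardNU (s : ℕ) (i k j : V) : ℕ∞ :=
  if k ∈ C then γ k i j else perceivedNU G C γ s k j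

variable {G C γ}

lemma perceivedNU_succ (s : ℕ) (i j : V) :
    perceivedNU G C γ (s + 1) i j =
      min (perceivedNU G C γ s i j) (1 + ⨅ k ∈ G.neighborSet i, heardNU G C γ s i k j) :=
  rfl

lemma perceivedNU_zero (i j : V) : perceivedNU G C γ 0 i j = if i = j then 0 else ⊤ := rfl

lemma inForwardSetNU_iff {i t k : V} :
    inForwardSetNU G C γ i t k ↔ i ≠ t ∧ G.Adj i k ∧
      ∀ k', G.Adj i k' → heardNU G C γ (Fintype.card V) i k t ≤
        heardNU G C γ (Fintype.card V) i k' t :=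
  Iff.rfl

lemma perceivedNU_antitone (i j : V) : Antitone fun s => perceivedNU G C γ s i j :=
  antitone_nat_of_succ_le fun _ => min_le_left _ _

lemma exists_perceivedNU_lt_of_succ_lt {s : ℕ} {i j : V}
    (h : perceivedNU G C γ (s + 2) i j < perceivedNU G C γ (s + 1) i j) :
    ∃ k, perceivedNU G C γ (s + 1) k j < perceivedNU G C γ s k j ∧
      perceivedNU G C γ (s + 2) i j = 1 + perceivedNU G C γ (s + 1) k j := by
  rw [perceivedNU_succ (s + 1)] at h ⊢
  have hlt := (min_lt_iff.mp h).resolve_left (lt_irrefl _)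
  rw [min_eq_right hlt.le]
  obtain ⟨k, hk, hmin⟩ := Set.exists_min_image (G.neighborSet i)
    (heardNU G C γ (s + 1) i · j) (Set.toFinite _)
    (Set.nonempty_iff_ne_empty.mpr fun h0 => by simp [h0] at hlt)
  have hinf : ⨅ k' ∈ G.neighborSet i, heardNU G C γ (s + 1) i k' j = heardNU G C γ (s + 1) i k j :=
    le_antisymm (iInf₂_le k hk) (le_iInf₂ hmin)
  rw [hinf] at hlt ⊢
  have hprev : perceivedNU G C γ (s + 1) i j ≤ 1 + heardNU G C γ s i k j :=
    (min_le_right _ _).trans (add_le_add_right (iInf₂_le k hk) 1)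
  by_cases hkC : k ∈ C
  · simp only [heardNU, hkC, if_true] at hlt hprev
    exact absurd hprev (not_le.mpr hlt)
  · simp only [heardNU, hkC, if_false] at hlt hprev ⊢
    refine ⟨k, lt_of_le_of_ne (perceivedNU_antitone k j s.le_succ) fun heq => ?_, rfl⟩
    rw [← heq] at hprev
    exact absurd hprev (not_le.mpr hlt)

/-- Following the chain of improvements backwards yields `s + 1` distinct vertices: a vertex
reappearing in the chain would hear its own, already smaller, value back. -/
lemma exists_card_eq_of_perceivedNU_succ_lt {s : ℕ} {i j : V}
    (h : perceivedNU G C γ (s + 1) i j < perceivedNU G C γ s i j) :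
    ∃ S : Finset V, S.card = s + 1 ∧
      ∀ y ∈ S, perceivedNU G C γ (s + 1) y j ≤ perceivedNU G C γ (s + 1) i j := by
  induction s generalizing i with
  | zero => exact ⟨{i}, rfl, by simp⟩
  | succ s ih =>
    obtain ⟨k, hk, hik⟩ := exists_perceivedNU_lt_of_succ_lt h
    obtain ⟨S, hcard, hS⟩ := ih hk
    have hiS : i ∉ S := fun hi => by
      have := (h.trans_le (hS i hi)).trans_eq' hik
      exact not_lt.mpr le_add_self this
    refine ⟨insert i S, by rw [Finset.card_insert_of_notMem hiS, hcard], ?_⟩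
    simp only [Finset.mem_insert, forall_eq_or_imp, le_rfl, true_and]
    intro y hy
    calc perceivedNU G C γ (s + 2) y j ≤ perceivedNU G C γ (s + 1) y j :=
          perceivedNU_antitone y j (by omega)
      _ ≤ perceivedNU G C γ (s + 1) k j := hS y hy
      _ ≤ perceivedNU G C γ (s + 2) i j := hik ▸ le_add_self

lemma perceivedNU_succ_eq_of_card_le {s : ℕ} (hs : Fintype.card V ≤ s) (i j : V) :
    perceivedNU G C γ (s + 1) i j = perceivedNU G C γ s i j := by
  refine (perceivedNU_antitone i j s.le_succ).eq_of_not_lt fun h => ?_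
  obtain ⟨S, hcard, -⟩ := exists_card_eq_of_perceivedNU_succ_lt h
  have := S.card_le_univ
  omega

theorem perceivedNU_eq_rhoNU {s : ℕ} (hs : Fintype.card V ≤ s) (i j : V) :
    perceivedNU G C γ s i j = rhoNU G C γ i j := by
  induction s, hs using Nat.le_induction with
  | base => rfl
  | succ s hs ih => rw [perceivedNU_succ_eq_of_card_le hs, ih]

end Nonuniform

section Uniform

variable [Fintype V] [DecidableEq V] {G : SimpleGraph V} {C : Finset V} {β : V → V → ℕ∞}

def toNonuniform (β : V → V → ℕ∞) : V → V → V → ℕ∞ := fun k _ j => β k j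

lemma perceived_of_mem {c : V} (hc : c ∈ C) (s : ℕ) (j : V) : perceived G C β s c j = β c j := by
  cases s <;> simp [perceived, hc]

lemma perceived_eq_perceivedNU {i : V} (hi : i ∉ C) (s : ℕ) (j : V) :
    perceived G C β s i j = perceivedNU G C (toNonuniform β) s i j := by
  induction s generalizing i with
  | zero => simp [perceived, perceivedNU, hi]
  | succ s ih =>
    simp only [perceived, hi, if_false, perceivedNU_succ, ih hi]
    congr 2
    refine iInf_congr fun k => iInf_congr fun _ => ?_
    by_cases hk : k ∈ C
    · simp [heardNU, hk, perceived_of_mem hk, toNonuniform]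
    · simp [heardNU, hk, ih hk]

lemma rho_eq_heardNU (i k t : V) :
    rho G C β k t = heardNU G C (toNonuniform β) (Fintype.card V) i k t := by
  by_cases hk : k ∈ C
  · simp [rho, heardNU, hk, perceived_of_mem hk, toNonuniform]
  · simp [rho, heardNU, hk, perceived_eq_perceivedNU hk]

lemma isCorrPath_iff_isCorrPathNU {s t : V} {ℓ : ℕ} {v : ℕ → V} :
    IsCorrPath G C β s t ℓ v ↔ IsCorrPathNU G C (toNonuniform β) s t ℓ v := by
  simp only [IsCorrPath, IsCorrPathNU, inForwardSet, inForwardSetNU_iff, ← rho_eq_heardNU]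

lemma admissible_iff_admissibleNU :
    Admissible G C β ↔ AdmissibleNU G C (toNonuniform β) := by
  simp only [Admissible, AdmissibleNU, isCorrPath_iff_isCorrPathNU]

lemma numCaptured_eq_numCapturedNU :
    numCaptured G C β = numCapturedNU G C (toNonuniform β) := by
  simp only [numCaptured, numCapturedNU, Captured, CapturedNU, isCorrPath_iff_isCorrPathNU]

end Uniform

section CorrStep

variable [Fintype V] [DecidableEq V] (G : SimpleGraph V) (C : Finset V) (γ : V → V → V → ℕ∞)

def CorrStepNU (t a b : V) : Prop :=
  G.Adj a b ∧ (a ∉ C → inForwardSetNU G C γ a t b)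

def uncapturedNU : Set (V × V) :=
  {p | p.1 ≠ p.2 ∧ ¬ CapturedNU G C γ p.1 p.2}

variable {G C γ}

lemma exists_isCorrPathNU_iff_reflTransGen {s t : V} :
    (∃ ℓ v, IsCorrPathNU G C γ s t ℓ v) ↔ ReflTransGen (CorrStepNU G C γ t) s t := by
  constructor
  · rintro ⟨ℓ, v, hv⟩
    induction ℓ generalizing s v with
    | zero => exact hv.1 ▸ hv.2.1 ▸ ReflTransGen.refl
    | succ ℓ ih =>
      obtain ⟨h0, hℓ, hadj, hfwd⟩ := hv
      refine ReflTransGen.head (b := v 1) ⟨h0 ▸ hadj 0 ℓ.succ_pos, h0 ▸ hfwd 0 ℓ.succ_pos⟩ ?_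
      exact ih (v := (v <| · + 1)) ⟨rfl, hℓ, fun i hi => hadj (i + 1) (by omega),
        fun i hi => hfwd (i + 1) (by omega)⟩
  · intro h
    induction h using ReflTransGen.head_induction_on with
    | refl => exact ⟨0, fun _ => t, rfl, rfl, by simp, by simp⟩
    | @head a _ hstep _ ih =>
      obtain ⟨ℓ, v, h0, hℓ, hadj, hfwd⟩ := ih
      refine ⟨ℓ + 1, fun n => Nat.casesOn (motive := fun _ => V) n a v, rfl, hℓ,
        fun i hi => ?_, fun i hi => ?_⟩
      · cases i with
        | zero => exact (h0 ▸ hstep.1 : G.Adj a (v 0))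
        | succ i => exact hadj i (by omega)
      · cases i with
        | zero => exact (h0 ▸ hstep.2 : a ∉ C → inForwardSetNU G C γ a t (v 0))
        | succ i => exact hfwd i (by omega)

lemma isCorrPathNU_congr {s t : V} {ℓ : ℕ} {v v' : ℕ → V} (h : ∀ i ≤ ℓ, v i = v' i) :
    IsCorrPathNU G C γ s t ℓ v ↔ IsCorrPathNU G C γ s t ℓ v' := by
  simp only [IsCorrPathNU, h 0 ℓ.zero_le, h ℓ le_rfl]
  exact and_congr_right' <| and_congr_right' <| and_congr
    (forall₂_congr fun i hi => by rw [h i hi.le, h (i + 1) hi])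
    (forall₂_congr fun i hi => by rw [h i hi.le, h (i + 1) hi])

lemma capturedNU_of_left_mem {s t : V} (hs : s ∈ C) : CapturedNU G C γ s t :=
  fun ℓ _ hv => ⟨0, ℓ.zero_le, hv.1 ▸ hs⟩

lemma capturedNU_of_right_mem {s t : V} (ht : t ∈ C) : CapturedNU G C γ s t :=
  fun ℓ _ hv => ⟨ℓ, le_rfl, hv.2.1 ▸ ht⟩

lemma numCapturedNU_add_ncard_uncapturedNU :
    numCapturedNU G C γ + (uncapturedNU G C γ).ncard =
      Fintype.card V * Fintype.card V - Fintype.card V := by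
  have hoff : {p : V × V | p.1 ≠ p.2} = ↑(Finset.univ : Finset V).offDiag := by
    ext; simp
  rw [← Finset.card_univ, ← Finset.offDiag_card, ← Set.ncard_coe_finset, ← hoff]
  exact Set.ncard_inter_add_ncard_sdiff_eq_ncard _ {p : V × V | CapturedNU G C γ p.1 p.2}

end CorrStep

section Metric

variable {G : SimpleGraph V}

lemma exists_adj_edist_add_one_le {u v : V} (hne : u ≠ v) (hr : G.Reachable u v) :
    ∃ w, G.Adj u w ∧ G.edist w v + 1 ≤ G.edist u v := by
  obtain ⟨p, hp⟩ := hr.exists_walk_length_eq_edist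
  cases p with
  | nil => exact absurd rfl hne
  | cons h q =>
    refine ⟨_, h, ?_⟩
    rw [← hp, SimpleGraph.Walk.length_cons, Nat.cast_succ]
    gcongr
    exact SimpleGraph.edist_le q

lemma edist_lt_card_of_reachable [Fintype V] [DecidableEq V] {u v : V} (hr : G.Reachable u v) :
    G.edist u v < Fintype.card V := by
  obtain ⟨p, -⟩ := hr.exists_walk_length_eq_edist
  exact (SimpleGraph.edist_le p.bypass).trans_lt (by exact_mod_cast p.bypass_isPath.length_lt)

end Metric

section Truthful

variable [Fintype V] [DecidableEq V] {G : SimpleGraph V} {C : Finset V} {γ : V → V → V → ℕ∞}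
  {t : V} (htruth : ∀ c ∈ C, ∀ u, G.Adj c u → γ c u t = G.edist c t)
include htruth

lemma heardNU_eq_edist {s : ℕ} {i k : V} (hik : G.Adj i k)
    (hs : ∀ w ∉ C, perceivedNU G C γ s w t = G.edist w t) :
    heardNU G C γ s i k t = G.edist k t := by
  unfold heardNU
  split_ifs with hk
  exacts [htruth k hk i hik.symm, hs k hk]

lemma edist_le_perceivedNU (s : ℕ) (i : V) : G.edist i t ≤ perceivedNU G C γ s i t := by
  induction s generalizing i with
  | zero =>
    by_cases h : i = t
    · simp [h]
    · simp [perceivedNU_zero, h]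
  | succ s ih =>
    rw [perceivedNU_succ]
    refine le_min (ih i) (tsub_le_iff_left.mp (le_iInf₂ fun k hik => tsub_le_iff_left.mpr ?_))
    calc G.edist i t ≤ G.edist i k + G.edist k t := SimpleGraph.edist_triangle
      _ = 1 + G.edist k t := by rw [SimpleGraph.edist_eq_one_iff_adj.mpr hik]
      _ ≤ 1 + heardNU G C γ s i k t := by
        unfold heardNU
        split_ifs with hk
        · rw [htruth k hk i hik.symm]
        · exact add_le_add_right (ih k) 1

lemma perceivedNU_le_edist {s : ℕ} {i : V} (hs : G.edist i t ≤ s) :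
    perceivedNU G C γ s i t ≤ G.edist i t := by
  induction s generalizing i with
  | zero =>
    obtain rfl : i = t := by simpa using hs
    simp [perceivedNU_zero]
  | succ s ih =>
    by_cases hit : i = t
    · subst hit
      exact (perceivedNU_antitone i i (Nat.zero_le _)).trans (by simp [perceivedNU_zero])
    obtain ⟨k, hik, hk⟩ := exists_adj_edist_add_one_le hit
      (SimpleGraph.reachable_of_edist_ne_top (ne_top_of_le_ne_top (ENat.natCast_ne_top _) hs))
    have hks : G.edist k t ≤ s := by
      push_cast at hs
      exact (WithTop.add_le_add_iff_right ENat.one_ne_top).mp (hk.trans hs)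
    rw [perceivedNU_succ]
    refine (min_le_right _ _).trans ((add_le_add_right (iInf₂_le k hik) 1).trans ?_)
    refine (add_le_add_right ?_ 1).trans ((add_comm _ _).trans_le hk)
    unfold heardNU
    split_ifs with hkC
    · rw [htruth k hkC i hik.symm]
    · exact ih hks

theorem rhoNU_eq_edist_of_truthful (i : V) : rhoNU G C γ i t = G.edist i t := by
  refine le_antisymm ?_ (edist_le_perceivedNU htruth _ i)
  by_cases hr : G.Reachable i t
  · exact perceivedNU_le_edist htruth (edist_lt_card_of_reachable hr).le
  · simp [SimpleGraph.edist_eq_top_of_not_reachable hr]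

/-- Honest agents forward along shortest paths towards `t`. -/
theorem reflTransGen_corrStepNU_of_truthful {s : V} (hr : G.Reachable s t) :
    ReflTransGen (CorrStepNU G C γ t) s t := by
  induction hd : G.dist s t using Nat.strong_induction_on generalizing s with
  | _ d ih =>
    by_cases hst : s = t
    · exact hst ▸ ReflTransGen.refl
    obtain ⟨k, hsk, hk⟩ := exists_adj_edist_add_one_le hst hr
    have hheard : ∀ k', G.Adj s k' → heardNU G C γ (Fintype.card V) s k' t = G.edist k' t :=
      fun k' hk' => heardNU_eq_edist htruth hk' fun w _ => rhoNU_eq_edist_of_truthful htruth w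
    obtain ⟨k₁, hsk₁, hk₁, hstep⟩ : ∃ k₁, G.Adj s k₁ ∧ G.edist k₁ t ≤ G.edist k t ∧
        CorrStepNU G C γ t s k₁ := by
      by_cases hsC : s ∈ C
      · exact ⟨k, hsk, le_rfl, hsk, absurd hsC⟩
      obtain ⟨k₁, hsk₁, hmin⟩ := Set.exists_min_image (G.neighborSet s)
        (heardNU G C γ (Fintype.card V) s · t) (Set.toFinite _) ⟨k, hsk⟩
      refine ⟨k₁, hsk₁, ?_, hsk₁, fun _ => ⟨hst, hsk₁, hmin⟩⟩
      rw [← hheard k₁ hsk₁, ← hheard k hsk]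
      exact hmin k hsk
    have hr₁ : G.Reachable k₁ t := hsk₁.symm.reachable.trans hr
    refine ReflTransGen.head hstep (ih _ ?_ hr₁ rfl)
    rw [← hd, ← Nat.cast_lt (α := ℕ∞), hr₁.coe_dist_eq_edist, hr.coe_dist_eq_edist]
    have hkt : G.edist k t ≠ ⊤ :=
      SimpleGraph.edist_ne_top_iff_reachable.mpr (hsk.symm.reachable.trans hr)
    exact hk₁.trans_lt ((ENat.add_one_le_iff hkt).mp hk)

end Truthful

section Subdivision

variable [DecidableEq V] {G : SimpleGraph V} [DecidableRel G.Adj] {C : Finset V}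

@[simp]
lemma inl_mem_subdivColluders [Fintype V] {x : V} :
    (Sum.inl x : SubdivVert G C) ∈ subdivColluders G C ↔ x ∈ C := by
  simp [subdivColluders]

@[simp]
lemma inr_mem_subdivColluders [Fintype V] (e : {p : V × V // p.1 ∈ C ∧ G.Adj p.1 p.2}) :
    (Sum.inr e : SubdivVert G C) ∈ subdivColluders G C := by
  simp [subdivColluders]

@[simp]
lemma subdivGraph_adj_inl_inl {u w : V} :
    (subdivGraph G C).Adj (.inl u) (.inl w) ↔ G.Adj u w ∧ u ∉ C ∧ w ∉ C :=
  Iff.rfl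

lemma card_le_card_subdivVert [Fintype V] : Fintype.card V ≤ Fintype.card (SubdivVert G C) := by
  simp [Fintype.card_sum]

lemma subdivGraph_adj_fst (e : {p : V × V // p.1 ∈ C ∧ G.Adj p.1 p.2}) :
    (subdivGraph G C).Adj (.inl e.1.1) (.inr e) :=
  Or.inl rfl

lemma subdivGraph_adj_snd (e : {p : V × V // p.1 ∈ C ∧ G.Adj p.1 p.2}) :
    (subdivGraph G C).Adj (.inl e.1.2) (.inr e) :=
  Or.inr rfl

/-- Contracts each subdivision vertex onto its colluding endpoint. -/
def subdivProj : SubdivVert G C → V :=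
  Sum.elim id fun e => e.1.1

@[simp]
lemma subdivProj_inl (u : V) : subdivProj (.inl u : SubdivVert G C) = u := rfl

lemma inl_subdivProj_of_notMem [Fintype V] {x : SubdivVert G C} (hx : x ∉ subdivColluders G C) :
    .inl (subdivProj x) = x ∧ subdivProj x ∉ C := by
  rcases x with u | e
  · simpa using hx
  · simp at hx

lemma image_subdivProj_neighborSet {i : V} (hi : i ∉ C) :
    subdivProj '' (subdivGraph G C).neighborSet (.inl i) = G.neighborSet i := by
  ext k
  constructor
  · rintro ⟨x | e, hx, rfl⟩
    · exact hx.1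
    · obtain rfl : i = e.1.2 := hx.resolve_left fun h => hi (h ▸ e.2.1)
      exact e.2.2.symm
  · intro hik
    by_cases hk : k ∈ C
    · exact ⟨.inr ⟨(k, i), hk, hik.symm⟩, Or.inr rfl, rfl⟩
    · exact ⟨.inl k, ⟨hik, hi, hk⟩, rfl⟩

lemma card_subdivEdges [Fintype V] {D : ℕ} (hreg : ∀ v, G.degree v = D) :
    Fintype.card {p : V × V // p.1 ∈ C ∧ G.Adj p.1 p.2} = C.card * D := by
  rw [Fintype.card_congr (Equiv.subtypeProdEquivSigmaSubtype fun c u => c ∈ C ∧ G.Adj c u),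
    Fintype.card_sigma]
  have hfiber (c : V) : Fintype.card {u // c ∈ C ∧ G.Adj c u} = if c ∈ C then D else 0 := by
    split_ifs with hc
    · simp only [hc, true_and, ← hreg c, ← card_neighborSet_eq_degree]
      rfl
    · simp [hc]
  simp [hfiber, Finset.sum_ite_mem]

lemma reachable_subdivGraph_inl {a b : V} (h : G.Reachable a b) :
    (subdivGraph G C).Reachable (.inl a) (.inl b) := by
  rw [reachable_iff_reflTransGen] at h ⊢
  refine ReflTransGen.lift' Sum.inl (fun a b hab => ?_) _ _ h
  by_cases ha : a ∈ C
  · let e : {p : V × V // p.1 ∈ C ∧ G.Adj p.1 p.2} := ⟨(a, b), ha, hab⟩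
    exact .head (subdivGraph_adj_fst e) (.single (subdivGraph_adj_snd e).symm)
  by_cases hb : b ∈ C
  · let e : {p : V × V // p.1 ∈ C ∧ G.Adj p.1 p.2} := ⟨(b, a), hb, hab.symm⟩
    exact .head (subdivGraph_adj_snd e) (.single (subdivGraph_adj_fst e).symm)
  · exact .single ⟨hab, ha, hb⟩

lemma connected_subdivGraph (hG : G.Connected) : (subdivGraph G C).Connected := by
  obtain ⟨v⟩ := hG.nonempty
  refine (connected_iff_exists_forall_reachable _).mpr ⟨.inl v, ?_⟩
  rintro (w | e)
  · exact reachable_subdivGraph_inl (hG v w)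
  · exact (reachable_subdivGraph_inl (hG v e.1.1)).trans ((subdivGraph_adj_fst e).reachable)

end Subdivision

def SubdivCompatible [DecidableEq V] {G : SimpleGraph V} [DecidableRel G.Adj] {C : Finset V}
    (γ : V → V → V → ℕ∞)
    (γ' : SubdivVert G C → SubdivVert G C → SubdivVert G C → ℕ∞) : Prop :=
  ∀ (e : {p : V × V // p.1 ∈ C ∧ G.Adj p.1 p.2}) (j : V), j ∉ C →
    γ' (.inr e) (.inl e.1.2) (.inl j) = γ e.1.1 e.1.2 j

section Compatible

variable [Fintype V] [DecidableEq V] {G : SimpleGraph V} [DecidableRel G.Adj] {C : Finset V}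
  {γ : V → V → V → ℕ∞} {γ' : SubdivVert G C → SubdivVert G C → SubdivVert G C → ℕ∞}
  (hγ : SubdivCompatible γ γ')
include hγ

lemma heardNU_subdivGraph {s s' : ℕ} {i j : V} (hi : i ∉ C) (hj : j ∉ C)
    (hP : ∀ w ∉ C, perceivedNU (subdivGraph G C) (subdivColluders G C) γ' s' (.inl w) (.inl j) =
      perceivedNU G C γ s w j)
    {x : SubdivVert G C} (hx : (subdivGraph G C).Adj (.inl i) x) :
    heardNU (subdivGraph G C) (subdivColluders G C) γ' s' (.inl i) x (.inl j) =
      heardNU G C γ s i (subdivProj x) j := by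
  rcases x with w | e
  · obtain ⟨-, -, hw⟩ := hx
    simp [heardNU, hw, hP w hw]
  · obtain rfl : i = e.1.2 := hx.resolve_left fun h => hi (h ▸ e.2.1)
    simp [heardNU, subdivProj, e.2.1, hγ e j hj]

lemma perceivedNU_subdivGraph {j : V} (hj : j ∉ C) (s : ℕ) {i : V} (hi : i ∉ C) :
    perceivedNU (subdivGraph G C) (subdivColluders G C) γ' s (.inl i) (.inl j) =
      perceivedNU G C γ s i j := by
  induction s generalizing i with
  | zero => simp [perceivedNU_zero]
  | succ s ih =>
    rw [perceivedNU_succ, perceivedNU_succ, ih hi, ← image_subdivProj_neighborSet hi, iInf_image]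
    congr 2
    exact iInf_congr fun x => iInf_congr fun hx =>
      heardNU_subdivGraph hγ hi hj (fun w hw => ih hw) hx

lemma heardNU_card_subdivGraph {i j : V} (hi : i ∉ C) (hj : j ∉ C) {x : SubdivVert G C}
    (hx : (subdivGraph G C).Adj (.inl i) x) :
    heardNU (subdivGraph G C) (subdivColluders G C) γ' (Fintype.card (SubdivVert G C))
        (.inl i) x (.inl j) =
      heardNU G C γ (Fintype.card V) i (subdivProj x) j := by
  refine heardNU_subdivGraph hγ hi hj (fun w hw => ?_) hx
  rw [perceivedNU_subdivGraph hγ hj _ hw, perceivedNU_eq_rhoNU card_le_card_subdivVert]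
  rfl

lemma inForwardSetNU_subdivGraph_iff {i j : V} (hi : i ∉ C) (hj : j ∉ C) {x : SubdivVert G C}
    (hx : (subdivGraph G C).Adj (.inl i) x) :
    inForwardSetNU (subdivGraph G C) (subdivColluders G C) γ' (.inl i) (.inl j) x ↔
      inForwardSetNU G C γ i j (subdivProj x) := by
  have hix : G.Adj i (subdivProj x) := by
    rw [← mem_neighborSet, ← image_subdivProj_neighborSet hi]
    exact ⟨x, hx, rfl⟩
  simp only [inForwardSetNU_iff, ne_eq, Sum.inl.injEq, hx, hix, true_and,
    heardNU_card_subdivGraph hγ hi hj hx]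
  refine and_congr_right fun _ => ?_
  have hnbr : ∀ k', G.Adj i k' ↔ k' ∈ subdivProj '' (subdivGraph G C).neighborSet (.inl i) :=
    fun k' => by rw [image_subdivProj_neighborSet hi]; rfl
  simp only [hnbr, Set.forall_mem_image]
  exact forall₂_congr fun x' hx' => by rw [heardNU_card_subdivGraph hγ hi hj hx']

end Compatible

section Paths

variable [Fintype V] [DecidableEq V] {G : SimpleGraph V} [DecidableRel G.Adj] {C : Finset V}
  {γ : V → V → V → ℕ∞} {γ' : SubdivVert G C → SubdivVert G C → SubdivVert G C → ℕ∞}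
  (hγ : SubdivCompatible γ γ') {t : V} (ht : t ∉ C)
include hγ ht

lemma reflTransGen_subdivGraph_of_corrStepNU {a b : V} (h : CorrStepNU G C γ t a b) :
    ReflTransGen (CorrStepNU (subdivGraph G C) (subdivColluders G C) γ' (.inl t))
      (.inl a) (.inl b) := by
  obtain ⟨hab, hfwd⟩ := h
  by_cases ha : a ∈ C
  · let e : {p : V × V // p.1 ∈ C ∧ G.Adj p.1 p.2} := ⟨(a, b), ha, hab⟩
    exact .head ⟨subdivGraph_adj_fst e, fun h => absurd (inl_mem_subdivColluders.mpr ha) h⟩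
      (.single ⟨(subdivGraph_adj_snd e).symm, fun h => absurd (inr_mem_subdivColluders e) h⟩)
  by_cases hb : b ∈ C
  · let e : {p : V × V // p.1 ∈ C ∧ G.Adj p.1 p.2} := ⟨(b, a), hb, hab.symm⟩
    have hx := subdivGraph_adj_snd e
    exact .head ⟨hx, fun _ => (inForwardSetNU_subdivGraph_iff hγ ha ht hx).mpr (hfwd ha)⟩
      (.single ⟨(subdivGraph_adj_fst e).symm, fun h => absurd (inr_mem_subdivColluders e) h⟩)
  · have hx : (subdivGraph G C).Adj (.inl a) (.inl b) := ⟨hab, ha, hb⟩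
    exact .single ⟨hx, fun _ => (inForwardSetNU_subdivGraph_iff hγ ha ht hx).mpr (hfwd ha)⟩

lemma reflTransGen_of_corrStepNU_subdivGraph {x y : SubdivVert G C}
    (h : CorrStepNU (subdivGraph G C) (subdivColluders G C) γ' (.inl t) x y) :
    ReflTransGen (CorrStepNU G C γ t) (subdivProj x) (subdivProj y) := by
  obtain ⟨hxy, hfwd⟩ := h
  rcases x with a | e <;> rcases y with b | f
  · exact .single ⟨hxy.1, fun ha => (inForwardSetNU_subdivGraph_iff hγ ha ht hxy).mp
      (hfwd (by simpa using ha))⟩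
  · by_cases hac : a = f.1.1
    · exact hac ▸ .refl
    obtain rfl := hxy.resolve_left hac
    exact .single ⟨f.2.2.symm, fun ha => (inForwardSetNU_subdivGraph_iff hγ ha ht hxy).mp
      (hfwd (by simpa using ha))⟩
  · rcases hxy with rfl | rfl
    · exact .refl
    · exact .single ⟨e.2.2, fun h => absurd e.2.1 h⟩
  · exact hxy.elim

lemma isCorrPathNU_subdivGraph_inl_iff {s : V} {ℓ : ℕ} {w : ℕ → V} (hw : ∀ i ≤ ℓ, w i ∉ C) :
    IsCorrPathNU (subdivGraph G C) (subdivColluders G C) γ' (.inl s) (.inl t) ℓ (.inl ∘ w) ↔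
      IsCorrPathNU G C γ s t ℓ w := by
  have hadj : ∀ i < ℓ, (subdivGraph G C).Adj (.inl (w i)) (.inl (w (i + 1))) ↔
      G.Adj (w i) (w (i + 1)) := fun i hi => by simp [hw i hi.le, hw (i + 1) hi]
  simp only [IsCorrPathNU, Function.comp_apply, Sum.inl.injEq, inl_mem_subdivColluders]
  refine and_congr_right' <| and_congr_right' <| and_congr (forall₂_congr hadj) ?_
  exact forall₂_congr fun i hi => imp_congr_right fun hwi =>
    ⟨fun h => (inForwardSetNU_subdivGraph_iff hγ hwi ht h.2.1).mp h,
      fun h => (inForwardSetNU_subdivGraph_iff hγ hwi ht ((hadj i hi).mpr h.2.1)).mpr h⟩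

end Paths

section Capture

variable [Fintype V] [DecidableEq V] {G : SimpleGraph V} [DecidableRel G.Adj] {C : Finset V}
  {γ : V → V → V → ℕ∞} {γ' : SubdivVert G C → SubdivVert G C → SubdivVert G C → ℕ∞}
  (hγ : SubdivCompatible γ γ')
include hγ

lemma capturedNU_subdivGraph_iff {s t : V} :
    CapturedNU (subdivGraph G C) (subdivColluders G C) γ' (.inl s) (.inl t) ↔
      CapturedNU G C γ s t := by
  by_cases hs : s ∈ C
  · exact iff_of_true (capturedNU_of_left_mem (by simpa using hs)) (capturedNU_of_left_mem hs)
  by_cases ht : t ∈ C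
  · exact iff_of_true (capturedNU_of_right_mem (by simpa using ht)) (capturedNU_of_right_mem ht)
  constructor
  · intro hcap ℓ w hw
    by_contra! hfree
    obtain ⟨i, hi, hmem⟩ :=
      hcap ℓ (.inl ∘ w) ((isCorrPathNU_subdivGraph_inl_iff hγ ht hfree).mpr hw)
    exact hfree i hi (by simpa using hmem)
  · intro hcap ℓ v hv
    by_contra! hfree
    have hrep i (hi : i ≤ ℓ) := inl_subdivProj_of_notMem (hfree i hi)
    rw [isCorrPathNU_congr (v' := .inl ∘ subdivProj ∘ v) fun i hi => (hrep i hi).1.symm] at hv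
    obtain ⟨i, hi, hmem⟩ :=
      hcap ℓ _ ((isCorrPathNU_subdivGraph_inl_iff hγ ht fun i hi => (hrep i hi).2).mp hv)
    exact (hrep i hi).2 hmem

lemma uncapturedNU_subdivGraph :
    uncapturedNU (subdivGraph G C) (subdivColluders G C) γ' =
      Prod.map .inl .inl '' uncapturedNU G C γ := by
  ext ⟨x, y⟩
  rcases x with a | e <;> rcases y with b | f <;>
    simp [uncapturedNU, capturedNU_subdivGraph_iff hγ,
      capturedNU_of_left_mem (inr_mem_subdivColluders _),
      capturedNU_of_right_mem (inr_mem_subdivColluders _)]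

lemma numCapturedNU_subdivGraph {M : ℕ}
    (hM : Fintype.card {p : V × V // p.1 ∈ C ∧ G.Adj p.1 p.2} = M) :
    numCapturedNU (subdivGraph G C) (subdivColluders G C) γ' =
      numCapturedNU G C γ + (M * (M - 1) + 2 * M * Fintype.card V) := by
  have h' := numCapturedNU_add_ncard_uncapturedNU (G := subdivGraph G C)
    (C := subdivColluders G C) (γ := γ')
  have h := numCapturedNU_add_ncard_uncapturedNU (G := G) (C := C) (γ := γ)
  rw [uncapturedNU_subdivGraph hγ,
    Set.ncard_image_of_injective _ (Sum.inl_injective.prodMap Sum.inl_injective),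
    Fintype.card_sum, hM] at h'
  have harith (n : ℕ) : (n + M) * (n + M) - (n + M) = n * n - n + (M * (M - 1) + 2 * M * n) := by
    rcases M with _ | M
    · simp
    · zify [Nat.le_mul_self n, Nat.le_mul_self (n + (M + 1))]
      push_cast
      ring
  rw [harith] at h'
  omega

end Capture

section Broadcasts

variable [DecidableEq V] {G : SimpleGraph V} [DecidableRel G.Adj] {C : Finset V}

noncomputable def subdivBroadcast (γ : V → V → V → ℕ∞) :
    SubdivVert G C → SubdivVert G C → ℕ∞
  | .inr e, .inl j => if j ∈ C then (subdivGraph G C).edist (.inr e) (.inl j) else γ e.1.1 e.1.2 j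
  | x, y => (subdivGraph G C).edist x y

noncomputable def contractBroadcast (β : SubdivVert G C → SubdivVert G C → ℕ∞) :
    V → V → V → ℕ∞ :=
  fun c u j => if j ∈ C then G.edist c j else
    if h : c ∈ C ∧ G.Adj c u then β (.inr ⟨(c, u), h⟩) (.inl j) else 0

variable {γ : V → V → V → ℕ∞} {β : SubdivVert G C → SubdivVert G C → ℕ∞}

lemma subdivCompatible_subdivBroadcast :
    SubdivCompatible γ (toNonuniform (subdivBroadcast (G := G) (C := C) γ)) := by
  intro e j hj
  simp [toNonuniform, subdivBroadcast, hj]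

lemma subdivCompatible_contractBroadcast :
    SubdivCompatible (contractBroadcast β) (toNonuniform β) := by
  intro e j hj
  simp [toNonuniform, contractBroadcast, hj, e.2]

lemma subdivBroadcast_of_mem [Fintype V] {y : SubdivVert G C} (hy : y ∈ subdivColluders G C)
    (x : SubdivVert G C) : subdivBroadcast γ x y = (subdivGraph G C).edist x y := by
  rcases x with a | e <;> rcases y with b | f <;> simp_all [subdivBroadcast]

lemma subdivBroadcast_self (x : SubdivVert G C) : subdivBroadcast γ x x = 0 := by
  rcases x with a | e <;> simp [subdivBroadcast]

lemma one_le_subdivBroadcast (hγ : ∀ c ∈ C, ∀ u, G.Adj c u → ∀ j, j ≠ c → 1 ≤ γ c u j)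
    {x y : SubdivVert G C} (hxy : y ≠ x) : 1 ≤ subdivBroadcast γ x y := by
  have hpos : 1 ≤ (subdivGraph G C).edist x y :=
    Order.one_le_iff_pos.mpr (SimpleGraph.edist_pos_of_ne hxy.symm)
  rcases x with a | e <;> rcases y with b | f <;> simp only [subdivBroadcast, hpos]
  split_ifs with hb
  · exact hpos
  · exact hγ _ e.2.1 _ e.2.2 _ fun h => hb (h ▸ e.2.1)

lemma contractBroadcast_self {c : V} (hc : c ∈ C) (u : V) : contractBroadcast β c u c = 0 := by
  simp [contractBroadcast, hc]

lemma one_le_contractBroadcast [Fintype V]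
    (hβ : ∀ c ∈ subdivColluders G C, ∀ t, t ≠ c → 1 ≤ β c t)
    {c u j : V} (hcu : c ∈ C ∧ G.Adj c u) (hjc : j ≠ c) : 1 ≤ contractBroadcast β c u j := by
  unfold contractBroadcast
  split_ifs with hj
  · exact Order.one_le_iff_pos.mpr (SimpleGraph.edist_pos_of_ne hjc.symm)
  · exact hβ _ (inr_mem_subdivColluders _) _ Sum.inl_ne_inr

theorem admissible_subdivBroadcast [Fintype V] (hG : G.Connected) (h : AdmissibleNU G C γ) :
    Admissible (subdivGraph G C) (subdivColluders G C) (subdivBroadcast γ) := by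
  rw [admissible_iff_admissibleNU]
  intro x y _
  rw [exists_isCorrPathNU_iff_reflTransGen]
  by_cases hy : y ∈ subdivColluders G C
  · exact reflTransGen_corrStepNU_of_truthful (fun c _ _ _ => subdivBroadcast_of_mem hy c)
      (connected_subdivGraph hG x y)
  obtain ⟨hj, hjC⟩ := inl_subdivProj_of_notMem hy
  rw [← hj]
  have hfrom (s : V) : ReflTransGen (CorrStepNU (subdivGraph G C) (subdivColluders G C)
      (toNonuniform (subdivBroadcast γ)) (.inl (subdivProj y))) (.inl s) (.inl (subdivProj y)) := by
    by_cases hs : s = subdivProj y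
    · exact hs ▸ .refl
    exact ReflTransGen.lift' Sum.inl
      (fun _ _ => reflTransGen_subdivGraph_of_corrStepNU subdivCompatible_subdivBroadcast hjC) _ _
      (exists_isCorrPathNU_iff_reflTransGen.mp (h s _ hs))
  rcases x with s | e
  · exact hfrom s
  · exact .head ⟨(subdivGraph_adj_snd e).symm, fun h => absurd (inr_mem_subdivColluders e) h⟩
      (hfrom e.1.2)

theorem admissibleNU_contractBroadcast [Fintype V] (hG : G.Connected)
    (h : Admissible (subdivGraph G C) (subdivColluders G C) β) :
    AdmissibleNU G C (contractBroadcast β) := by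
  intro s t hst
  rw [exists_isCorrPathNU_iff_reflTransGen]
  by_cases ht : t ∈ C
  · exact reflTransGen_corrStepNU_of_truthful (fun c _ _ _ => by simp [contractBroadcast, ht])
      (hG s t)
  rw [admissible_iff_admissibleNU] at h
  exact ReflTransGen.lift' subdivProj
    (fun _ _ => reflTransGen_of_corrStepNU_subdivGraph subdivCompatible_contractBroadcast ht) _ _
    (exists_isCorrPathNU_iff_reflTransGen.mp (h (.inl s) (.inl t) (by simpa using hst)))

end Broadcasts

theorem nonuniform_reduces_to_uniform_general [Fintype V] [DecidableEq V]
    (G : SimpleGraph V) [DecidableRel G.Adj]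
    (hG : G.Connected)
    (D : ℕ) (hreg : ∀ v : V, G.degree v = D)
    (C : Finset V)
    (m : ℕ) :
    (∃ γ : V → V → V → ℕ∞,
        (∀ c ∈ C, ∀ u : V, G.Adj c u → γ c u c = 0) ∧
        (∀ c ∈ C, ∀ u : V, G.Adj c u → ∀ j : V, j ≠ c → 1 ≤ γ c u j) ∧
        AdmissibleNU G C γ ∧ m ≤ numCapturedNU G C γ) ↔
      (∃ β : SubdivVert G C → SubdivVert G C → ℕ∞,
        (∀ c ∈ subdivColluders G C, β c c = 0) ∧
        (∀ c ∈ subdivColluders G C, ∀ t : SubdivVert G C, t ≠ c → 1 ≤ β c t) ∧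
        Admissible (subdivGraph G C) (subdivColluders G C) β ∧
        m + C.card * D * (C.card * D - 1) + 2 * (C.card * D) * Fintype.card V ≤
          numCaptured (subdivGraph G C) (subdivColluders G C) β) := by
  constructor
  · rintro ⟨γ, -, hγ₁, hadm, hm⟩
    refine ⟨subdivBroadcast γ, fun c _ => subdivBroadcast_self c,
      fun c _ t htc => one_le_subdivBroadcast hγ₁ htc, admissible_subdivBroadcast hG hadm, ?_⟩
    rw [numCaptured_eq_numCapturedNU,
      numCapturedNU_subdivGraph subdivCompatible_subdivBroadcast (card_subdivEdges hreg)]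
    omega
  · rintro ⟨β, -, hβ₁, hadm, hm⟩
    refine ⟨contractBroadcast β, fun c hc u _ => contractBroadcast_self hc u,
      fun c hc u hcu j hjc => one_le_contractBroadcast hβ₁ ⟨hc, hcu⟩ hjc,
      admissibleNU_contractBroadcast hG hadm, ?_⟩
    rw [numCaptured_eq_numCapturedNU,
      numCapturedNU_subdivGraph subdivCompatible_contractBroadcast (card_subdivEdges hreg)] at hm
    omega

/-- For a finite connected `D`-regular graph `G` and an independent
set `C` of colluders, nonuniform monitoring on `(G, C)` reduces to uniform monitoring
on the subdivided graph `(G', C')`: for every `m`, there is an admissible nonuniform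
broadcast `γ` for `(G,C)` capturing at least `m` ordered pairs iff there is an
admissible uniform broadcast `β` for `(G',C')` capturing at least
`m + |C|·D·(|C|·D - 1) + 2·|C|·D·|V|` ordered pairs. -/
theorem nonuniform_reduces_to_uniform [Fintype V] [DecidableEq V]
    (G : SimpleGraph V) [DecidableRel G.Adj]
    (hG : G.Connected) (hn : 2 ≤ Fintype.card V)
    (D : ℕ) (hD : 1 ≤ D) (hreg : ∀ v : V, G.degree v = D)
    (C : Finset V) (hsep : ∀ x ∈ C, ∀ y ∈ C, ¬ G.Adj x y)
    (m : ℕ) :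
    (∃ γ : V → V → V → ℕ∞,
        (∀ c ∈ C, ∀ u : V, G.Adj c u → γ c u c = 0) ∧
        (∀ c ∈ C, ∀ u : V, G.Adj c u → ∀ j : V, j ≠ c → 1 ≤ γ c u j) ∧
        AdmissibleNU G C γ ∧ m ≤ numCapturedNU G C γ) ↔
      (∃ β : SubdivVert G C → SubdivVert G C → ℕ∞,
        (∀ c ∈ subdivColluders G C, β c c = 0) ∧
        (∀ c ∈ subdivColluders G C, ∀ t : SubdivVert G C, t ≠ c → 1 ≤ β c t) ∧
        Admissible (subdivGraph G C) (subdivColluders G C) β ∧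
        m + C.card * D * (C.card * D - 1) + 2 * (C.card * D) * Fintype.card V ≤
          numCaptured (subdivGraph G C) (subdivColluders G C) β) :=
  nonuniform_reduces_to_uniform_general G hG D hreg C m

end Intercept
end

section
/- If every colluding agent broadcasts β(c,t) = max(d(c,t) − 2, 1) for all t ≠ c, then the lies change perceived distances by at most two: for every vertex i and every target t ≠ i, the stationary perceived distance satisfies max(d(i,t) − 2, 1) ≤ ρ(i,t) ≤ d(i,t). -/
open SimpleGraph

namespace Intercept

variable {V : Type*}

/-- The broadcast in which each colluding agent independently lies by two:
`β*(c,t) = max (d(c,t) - 2) 1` for `t ≠ c`, and `β*(c,c) = 0`. -/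
noncomputable def betaStar [DecidableEq V] (G : SimpleGraph V) : V → V → ℕ∞ :=
  fun c t => if c = t then 0 else ((max (G.dist c t - 2) 1 : ℕ) : ℕ∞)

lemma one_le_perceived [Fintype V] [DecidableEq V] (G : SimpleGraph V)
    (C : Finset V) (s : ℕ) :
    ∀ i j : V, i ≠ j → 1 ≤ perceived G C (betaStar G) s i j := by
  induction s with
  | zero =>
    intro i j hij
    simp only [perceived, betaStar, if_neg hij]
    split
    · exact_mod_cast le_max_right _ 1
    · exact le_top
  | succ s ih =>
    intro i j hij
    simp only [perceived]
    split
    · simp only [betaStar, if_neg hij]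
      exact_mod_cast le_max_right _ 1
    · exact le_min (ih i j hij) le_self_add

lemma dist_le_perceived_add_two [Fintype V] [DecidableEq V] (G : SimpleGraph V)
    (hG : G.Connected) (C : Finset V) (s : ℕ) :
    ∀ i j : V, (G.dist i j : ℕ∞) ≤ perceived G C (betaStar G) s i j + 2 := by
  have hbeta : ∀ i j : V, (G.dist i j : ℕ∞) ≤ betaStar G i j + 2 := by
    intro i j
    simp only [betaStar]
    split
    · subst ‹i = j›; simp [SimpleGraph.dist_self]
    · have : G.dist i j ≤ max (G.dist i j - 2) 1 + 2 := by
        have := le_max_left (G.dist i j - 2) 1; omega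
      exact_mod_cast this
  induction s with
  | zero =>
    intro i j
    simp only [perceived]
    split
    · exact hbeta i j
    · split
      · subst ‹i = j›; simp [SimpleGraph.dist_self]
      · rw [top_add]; exact le_top
  | succ s ih =>
    intro i j
    simp only [perceived]
    split
    · exact hbeta i j
    · rw [← min_add_add_right]
      refine le_min (ih i j) ?_
      have h3 : (G.dist i j : ℕ∞) - 3 ≤ ⨅ k ∈ G.neighborSet i, perceived G C (betaStar G) s k j := by
        refine le_iInf₂ fun k hk => ?_
        have hadj : G.Adj i k := hk
        have htri : G.dist i j ≤ 1 + G.dist k j := by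
          have := hG.dist_triangle (u := i) (v := k) (w := j)
          rw [dist_eq_one_iff_adj.mpr hadj] at this
          omega
        have h1 : (G.dist i j : ℕ∞) ≤ 1 + (G.dist k j : ℕ∞) := by exact_mod_cast htri
        have h2 := ih k j
        rw [tsub_le_iff_left]
        calc (G.dist i j : ℕ∞) ≤ 1 + (G.dist k j : ℕ∞) := h1
          _ ≤ 1 + (perceived G C (betaStar G) s k j + 2) := by
              exact add_le_add le_rfl h2
          _ = 3 + perceived G C (betaStar G) s k j := by ring
      rw [tsub_le_iff_left] at h3
      calc (G.dist i j : ℕ∞) ≤ 3 + ⨅ k ∈ G.neighborSet i, perceived G C (betaStar G) s k j := h3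
        _ = 1 + (⨅ k ∈ G.neighborSet i, perceived G C (betaStar G) s k j) + 2 := by ring

lemma perceived_le_dist [Fintype V] [DecidableEq V] (G : SimpleGraph V)
    (hG : G.Connected) (C : Finset V) (s : ℕ) :
    ∀ i j : V, G.dist i j ≤ s → perceived G C (betaStar G) s i j ≤ (G.dist i j : ℕ∞) := by
  have hbeta : ∀ i j : V, betaStar G i j ≤ (G.dist i j : ℕ∞) := by
    intro i j
    simp only [betaStar]
    split
    · subst ‹i = j›; simp
    · have hpos : 0 < G.dist i j := hG.pos_dist_of_ne ‹i ≠ j›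
      have : max (G.dist i j - 2) 1 ≤ G.dist i j := by omega
      exact_mod_cast this
  induction s with
  | zero =>
    intro i j hle
    have hij : i = j := hG.dist_eq_zero_iff.mp (Nat.le_zero.mp hle)
    subst hij
    simp only [perceived]
    split
    · exact (hbeta i i).trans (by simp)
    · simp
  | succ s ih =>
    intro i j hle
    simp only [perceived]
    split
    · exact hbeta i j
    · by_cases hij : i = j
      · subst hij
        exact min_le_of_left_le (ih i i (by simp [hG.dist_eq_zero_iff.mpr rfl]))
      · obtain ⟨w, hw⟩ := (hG i j).exists_walk_length_eq_dist
        cases w with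
        | nil => exact absurd rfl hij
        | @cons _ k _ hadj p =>
          simp only [Walk.length_cons] at hw
          have hkj : G.dist k j ≤ p.length := dist_le p
          have hkj' : G.dist k j ≤ s := by omega
          refine min_le_of_right_le ?_
          have hle1 : (⨅ k ∈ G.neighborSet i, perceived G C (betaStar G) s k j)
              ≤ perceived G C (betaStar G) s k j := iInf₂_le k hadj
          have heq : (G.dist i j : ℕ∞) = 1 + ((G.dist k j : ℕ)) := by
            have : G.dist i j = 1 + G.dist k j := by
              have := hG.dist_triangle (u := i) (v := k) (w := j)
              rw [dist_eq_one_iff_adj.mpr hadj] at this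
              omega
            exact_mod_cast this
          rw [heq]
          exact add_le_add le_rfl (hle1.trans (ih k j hkj'))

/-- If every colluding agent broadcasts `max (d(c,t) - 2) 1`, the
lies change perceived distances by at most two: for every vertex `i` and target
`t ≠ i`, `max (d(i,t) - 2) 1 ≤ ρ(i,t) ≤ d(i,t)`. -/
theorem lies_change_by_at_most_two [Fintype V] [DecidableEq V] (G : SimpleGraph V)
    (hG : G.Connected) (hn : 2 ≤ Fintype.card V) (C : Finset V)
    (i t : V) (hti : t ≠ i) :
    ((max (G.dist i t - 2) 1 : ℕ) : ℕ∞) ≤ rho G C (betaStar G) i t ∧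
      rho G C (betaStar G) i t ≤ (G.dist i t : ℕ∞) := by
  have hit : i ≠ t := hti.symm
  have hdlt : G.dist i t < Fintype.card V := by
    obtain ⟨w, hw⟩ := (hG i t).exists_walk_length_eq_dist
    have h0 := SimpleGraph.dist_le w.bypass
    have h1 := Walk.length_bypass_le w
    have h2 := w.bypass_isPath.length_lt
    omega
  constructor
  · rw [Nat.mono_cast.map_max]
    refine max_le ?_ ?_
    · rw [ENat.coe_sub, tsub_le_iff_right]
      exact_mod_cast dist_le_perceived_add_two G hG C (Fintype.card V) i t
    · exact_mod_cast one_le_perceived G C (Fintype.card V) i t hit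
  · exact perceived_le_dist G hG C (Fintype.card V) i t hdlt.le


end Intercept
end

section
/- For all distinct colluding agents x, y ∈ C and every target t with t ≠ x and t ≠ y: d(x,y) + ρ*(y,t) ≥ ρ*(x,t) + 2 (equivalently, ρ*(x,t) ≤ d(x,y) − 2 + ρ*(y,t)). -/
open SimpleGraph

namespace Intercept

variable {V : Type*}

/-- The `j`-th colluding distance `d_j(x,y)`: the least total length of a sequence of
`j` distinct colluding vertices starting at `x` and ending at `y`, measured by summing
the graph distances of consecutive members (`⊤` if no such sequence exists). -/
noncomputable def collDist (G : SimpleGraph V) (C : Finset V) (j : ℕ) (x y : V) : ℕ∞ :=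
  ⨅ (σ : ℕ → V) (_ : σ 0 = x ∧ σ (j - 1) = y ∧ (∀ i < j, σ i ∈ C) ∧
      ∀ a < j, ∀ b < j, σ a = σ b → a = b),
    ∑ i ∈ Finset.range (j - 1), (G.dist (σ i) (σ (i + 1)) : ℕ∞)

/-- `ρ'(x,t) = max (d(x,t) - 2) 1`. -/
noncomputable def rhoPrime (G : SimpleGraph V) (x t : V) : ℕ∞ :=
  max ((G.dist x t : ℕ∞) - 2) 1

/-- `ρ''(x,t)`: the minimum over colluders `y` and `1 ≤ j ≤ |C|` of
`d_j(x,y) - 2(j-1) + ρ'(y,t)`. -/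
noncomputable def rhoPrime2 (G : SimpleGraph V) (C : Finset V) (x t : V) : ℕ∞ :=
  ⨅ y ∈ C, ⨅ j ∈ Finset.Icc 1 C.card,
    (collDist G C j x y - ((2 * (j - 1) : ℕ) : ℕ∞) + rhoPrime G y t)

/-- The optimal separated broadcast `ρ*(x,t) = min (ρ'(x,t)) (ρ''(x,t))`,
with `ρ*(x,x) = 0`. -/
noncomputable def rhoStar [DecidableEq V] (G : SimpleGraph V) (C : Finset V)
    (x t : V) : ℕ∞ :=
  if x = t then 0 else min (rhoPrime G x t) (rhoPrime2 G C x t)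

/-- A colluder `x` is proper for target `t` if `ρ*(x,t) < ρ'(x,t)`. -/
def Proper [DecidableEq V] (G : SimpleGraph V) (C : Finset V) (x t : V) : Prop :=
  rhoStar G C x t < rhoPrime G x t

open scoped Classical in
/-- The forwarding number of `x` for `t`: the least `j ≥ 1` such that
`ρ*(x,t) = d_j(x,y) - 2(j-1) + ρ'(y,t)` for some colluder `y`, improper
vertices being assigned forwarding number `1`. -/
noncomputable def fwdNum [DecidableEq V] (G : SimpleGraph V) (C : Finset V)
    (x t : V) : ℕ :=
  if Proper G C x t then
    sInf {j : ℕ | 1 ≤ j ∧ ∃ y ∈ C, rhoStar G C x t =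
      collDist G C j x y - ((2 * (j - 1) : ℕ) : ℕ∞) + rhoPrime G y t}
  else 1



private lemma two_le_dist_aux (G : SimpleGraph V) (hG : G.Connected)
    {u v : V} (h : ¬ G.Adj u v) (hne : u ≠ v) : 2 ≤ G.dist u v := by
  have h1 : G.dist u v ≠ 0 := by
    rw [ne_eq, hG.dist_eq_zero_iff]; exact hne
  have h2 : G.dist u v ≠ 1 := fun hd => h (SimpleGraph.dist_eq_one_iff_adj.mp hd)
  omega

private lemma le_sub_of_add_le' {a b : ℕ∞} (n : ℕ∞) (hn : n ≠ ⊤) (h : a + n ≤ b) :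
    a ≤ b - n := by
  have h2 := tsub_le_tsub_right h n
  rwa [(ENat.addLECancellable_of_ne_top hn).add_tsub_cancel_right] at h2

private lemma cast_max_sub (a : ℕ) : ((max (a - 2) 1 : ℕ) : ℕ∞) = max ((a:ℕ∞) - 2) 1 := by
  rw [Monotone.map_max (f := (Nat.cast : ℕ → ℕ∞)) (fun _ _ h => by exact_mod_cast h)]
  push_cast [ENat.coe_sub]
  rfl


private lemma rhoStar_le_of_seq [Fintype V] [DecidableEq V] (G : SimpleGraph V)
    (C : Finset V) (x t z : V) (hxt : x ≠ t) (hz : z ∈ C)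
    (j : ℕ) (hj : j ∈ Finset.Icc 1 C.card) (σ : ℕ → V)
    (h0 : σ 0 = x) (h1 : σ (j-1) = z) (hC : ∀ i < j, σ i ∈ C)
    (hinj : ∀ a < j, ∀ b < j, σ a = σ b → a = b) :
    rhoStar G C x t ≤ (((∑ i ∈ Finset.range (j-1), G.dist (σ i) (σ (i+1))) : ℕ) : ℕ∞)
      - ((2*(j-1) : ℕ) : ℕ∞) + rhoPrime G z t := by
  rw [rhoStar, if_neg hxt]
  refine le_trans (min_le_right _ _) ?_
  rw [rhoPrime2]
  refine le_trans (iInf₂_le z hz) (le_trans (iInf₂_le j hj) ?_)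
  refine add_le_add_left (tsub_le_tsub_right ?_ _) _
  rw [collDist]
  refine le_trans (iInf₂_le σ ⟨h0, h1, hC, hinj⟩) ?_
  rw [Nat.cast_sum]


private lemma enat_step' {A : ℕ∞} {B E : ℕ} (h : A ≤ (B:ℕ∞)) (hnum : B + 2 ≤ E) :
    A + 2 ≤ (E : ℕ∞) := by
  calc A + 2 ≤ (B:ℕ∞) + 2 := add_le_add_left h 2
    _ = ((B+2 : ℕ) : ℕ∞) := by push_cast; ring
    _ ≤ _ := Nat.cast_le.mpr hnum

private lemma rhoPrime_cast (G : SimpleGraph V) (z t : V) :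
    rhoPrime G z t = ((max (G.dist z t - 2) 1 : ℕ) : ℕ∞) := by
  rw [rhoPrime, cast_max_sub]

private def consSeq (x : V) (σ : ℕ → V) : ℕ → V
  | 0 => x
  | k+1 => σ k

private lemma key_bound [Fintype V] [DecidableEq V] (G : SimpleGraph V)
    (hG : G.Connected) (C : Finset V) (hsep : ∀ x ∈ C, ∀ y ∈ C, ¬ G.Adj x y)
    (x y z t : V) (hx : x ∈ C) (hy : y ∈ C) (hz : z ∈ C) (hxt : x ≠ t)
    (hd2 : 2 ≤ G.dist x y)
    (j : ℕ) (hj1 : 1 ≤ j) (hjc : j ≤ C.card) (σ : ℕ → V)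
    (h0 : σ 0 = y) (h1 : σ (j-1) = z) (hCm : ∀ i < j, σ i ∈ C)
    (hinj : ∀ a < j, ∀ b < j, σ a = σ b → a = b) :
    rhoStar G C x t + 2 ≤
      ((G.dist x y + max (G.dist z t - 2) 1 +
        ((∑ i ∈ Finset.range (j-1), G.dist (σ i) (σ (i+1))) - 2*(j-1)) : ℕ) : ℕ∞) := by
  obtain ⟨n, rfl⟩ : ∃ n, j = n + 1 := ⟨j - 1, by omega⟩
  have hterm : ∀ i, i < n → 2 ≤ G.dist (σ i) (σ (i+1)) := by
    intro i hi
    refine two_le_dist_aux G hG (hsep _ (hCm i (by omega)) _ (hCm (i+1) (by omega))) ?_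
    intro he
    have := hinj i (by omega) (i+1) (by omega) he
    omega
  by_cases hmem : ∃ m, m < n + 1 ∧ σ m = x
  · obtain ⟨m, hmn, hσm⟩ := hmem
    have hB0 : rhoStar G C x t ≤
        ((∑ i ∈ Finset.range (n+1-m-1), G.dist (σ (m+i)) (σ (m+(i+1))) : ℕ) : ℕ∞)
          - ((2*(n+1-m-1) : ℕ) : ℕ∞) + rhoPrime G z t :=
      rhoStar_le_of_seq G C x t z hxt hz (n+1-m)
        (Finset.mem_Icc.mpr ⟨by omega, by omega⟩) (fun i => σ (m+i))
        hσm (by show σ (m + (n+1-m-1)) = z; rw [show m + (n+1-m-1) = n+1-1 from by omega]; exact h1)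
        (fun i hi => hCm (m+i) (by omega))
        (fun a ha b hb hab => by
          have := hinj (m+a) (by omega) (m+b) (by omega) hab; omega)
    rw [rhoPrime_cast, ← ENat.coe_sub, ← Nat.cast_add] at hB0
    have hsplit : (∑ i ∈ Finset.range (n+1-1), G.dist (σ i) (σ (i+1)))
        = (∑ i ∈ Finset.range m, G.dist (σ i) (σ (i+1)))
          + ∑ i ∈ Finset.range (n+1-m-1), G.dist (σ (m+i)) (σ (m+(i+1))) := by
      rw [show (∑ i ∈ Finset.range (n+1-m-1), G.dist (σ (m+i)) (σ (m+(i+1))))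
            = ∑ i ∈ Finset.range (n+1-m-1), G.dist (σ (m+i)) (σ (m+i+1)) from rfl,
        ← Finset.sum_range_add, show m + (n+1-m-1) = n+1-1 from by omega]
    have hP : 2*m ≤ ∑ i ∈ Finset.range m, G.dist (σ i) (σ (i+1)) := by
      calc 2*m = ∑ _i ∈ Finset.range m, 2 := by
            simp [Finset.sum_const, mul_comm]
        _ ≤ _ := Finset.sum_le_sum fun i hi =>
            hterm i (by have := Finset.mem_range.mp hi; omega)
    exact enat_step' hB0 (by omega)
  · push_neg at hmem
    have hxnot : x ∉ (Finset.range (n+1)).image σ := by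
      rw [Finset.mem_image]
      rintro ⟨i, hi, he⟩
      exact hmem i (Finset.mem_range.mp hi) he
    have hcard : n + 2 ≤ C.card := by
      have h1c : (insert x ((Finset.range (n+1)).image σ)).card = n + 2 := by
        rw [Finset.card_insert_of_notMem hxnot,
          Finset.card_image_of_injOn
            (fun a ha b hb hab => hinj a (by simpa using ha) b (by simpa using hb) hab),
          Finset.card_range]
      calc n + 2 = _ := h1c.symm
        _ ≤ C.card := Finset.card_le_card (by
            intro v hv
            rcases Finset.mem_insert.mp hv with rfl | hv'
            · exact hx
            · obtain ⟨i, hi, rfl⟩ := Finset.mem_image.mp hv'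
              exact hCm i (Finset.mem_range.mp hi))
    have hB0 : rhoStar G C x t ≤
        ((∑ i ∈ Finset.range (n+2-1), G.dist (consSeq x σ i) (consSeq x σ (i+1)) : ℕ) : ℕ∞)
          - ((2*(n+2-1) : ℕ) : ℕ∞) + rhoPrime G z t :=
      rhoStar_le_of_seq G C x t z hxt hz (n+2)
        (Finset.mem_Icc.mpr ⟨by omega, hcard⟩) (consSeq x σ)
        rfl h1
        (by
          intro i hi
          cases i with
          | zero => exact hx
          | succ k => exact hCm k (by omega))
        (by
          intro a ha b hb hab
          cases a with
          | zero =>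
            cases b with
            | zero => rfl
            | succ k => exact absurd (show σ k = x from hab.symm) (hmem k (by omega))
          | succ k =>
            cases b with
            | zero => exact absurd (show σ k = x from hab) (hmem k (by omega))
            | succ k' =>
              have := hinj k (by omega) k' (by omega) hab
              omega)
    rw [rhoPrime_cast, ← ENat.coe_sub, ← Nat.cast_add] at hB0
    have hsum : (∑ i ∈ Finset.range (n+2-1), G.dist (consSeq x σ i) (consSeq x σ (i+1)))
        = G.dist x y + ∑ i ∈ Finset.range (n+1-1), G.dist (σ i) (σ (i+1)) := by
      rw [show n+2-1 = n+1 from rfl, Finset.sum_range_succ',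
        show (∑ i ∈ Finset.range n, G.dist (consSeq x σ (i+1)) (consSeq x σ (i+1+1)))
          = ∑ i ∈ Finset.range n, G.dist (σ i) (σ (i+1)) from rfl,
        show G.dist (consSeq x σ 0) (consSeq x σ 1) = G.dist x y from by
          rw [show consSeq x σ 1 = σ 0 from rfl, h0]; rfl,
        show n+1-1 = n from rfl]
      exact Nat.add_comm _ _
    rw [hsum] at hB0
    have hS2 : 2*(n+1-1) ≤ ∑ i ∈ Finset.range (n+1-1), G.dist (σ i) (σ (i+1)) := by
      calc 2*(n+1-1) = ∑ _i ∈ Finset.range (n+1-1), 2 := by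
            simp [Finset.sum_const, mul_comm]
        _ ≤ _ := Finset.sum_le_sum fun i hi =>
            hterm i (by have := Finset.mem_range.mp hi; omega)
    exact enat_step' hB0 (by omega)

/-- For all distinct colluding agents `x, y ∈ C` and every target
`t` with `t ≠ x` and `t ≠ y`: `d(x,y) + ρ*(y,t) ≥ ρ*(x,t) + 2`. -/
theorem rhoStar_inductive_path [Fintype V] [DecidableEq V] (G : SimpleGraph V)
    (hG : G.Connected) (C : Finset V)
    (hsep : ∀ x ∈ C, ∀ y ∈ C, ¬ G.Adj x y)
    (x y : V) (hx : x ∈ C) (hy : y ∈ C) (hxy : x ≠ y)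
    (t : V) (htx : t ≠ x) (hty : t ≠ y) :
    rhoStar G C x t + 2 ≤ (G.dist x y : ℕ∞) + rhoStar G C y t := by
  classical
  have hxt : x ≠ t := fun h => htx h.symm
  have hyt : y ≠ t := fun h => hty h.symm
  have hd2 : 2 ≤ G.dist x y := two_le_dist_aux G hG (hsep x hx y hy) hxy
  conv_rhs => rw [rhoStar, if_neg hyt]
  rcases min_cases (rhoPrime G y t) (rhoPrime2 G C y t) with ⟨hm, _⟩ | ⟨hm, _⟩ <;> rw [hm]
  · -- branch ρ'(y,t)
    have key := key_bound G hG C hsep x y y t hx hy hy hxt hd2 1 le_rfl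
      (Finset.card_pos.mpr ⟨x, hx⟩) (fun _ => y) rfl rfl (fun _ _ => hy)
      (fun a ha b hb _ => by omega)
    rw [rhoPrime_cast, ← Nat.cast_add]
    exact le_trans key (Nat.cast_le.mpr (by simp))
  · -- branch ρ''(y,t)
    rw [← tsub_le_iff_left, rhoPrime2]
    refine le_iInf₂ fun z hz => le_iInf₂ fun j hj => ?_
    obtain ⟨hj1, hjc⟩ := Finset.mem_Icc.mp hj
    rw [tsub_le_iff_left,
      show ((G.dist x y : ℕ∞)) + (collDist G C j y z - ((2*(j-1) : ℕ) : ℕ∞) + rhoPrime G z t)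
        = (((G.dist x y : ℕ∞)) + rhoPrime G z t) + (collDist G C j y z - ((2*(j-1) : ℕ) : ℕ∞))
        from by rw [add_comm (collDist G C j y z - ((2*(j-1) : ℕ) : ℕ∞)) (rhoPrime G z t),
          ← add_assoc],
      ← tsub_le_iff_left]
    refine le_sub_of_add_le' _ (ENat.coe_ne_top _) ?_
    rw [collDist]
    refine le_iInf fun σ => le_iInf fun hcond => ?_
    obtain ⟨h0, h1, hCm, hinj⟩ := hcond
    set S : ℕ := ∑ i ∈ Finset.range (j-1), G.dist (σ i) (σ (i+1)) with hS
    have hterm : ∀ i, i + 1 < j → 2 ≤ G.dist (σ i) (σ (i+1)) := by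
      intro i hi
      refine two_le_dist_aux G hG (hsep _ (hCm i (by omega)) _ (hCm (i+1) (by omega))) ?_
      intro he
      have := hinj i (by omega) (i+1) (by omega) he
      omega
    have hSc : 2*(j-1) ≤ S := by
      calc 2*(j-1) = ∑ _i ∈ Finset.range (j-1), 2 := by simp [Finset.sum_const, mul_comm]
        _ ≤ S := Finset.sum_le_sum fun i hi =>
            hterm i (by have := Finset.mem_range.mp hi; omega)
    have key2 : rhoStar G C x t + 2 ≤
        ((G.dist x y : ℕ∞) + rhoPrime G z t) + ((S : ℕ∞) - ((2*(j-1) : ℕ) : ℕ∞)) := by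
      calc rhoStar G C x t + 2
          ≤ ((G.dist x y + max (G.dist z t - 2) 1 + (S - 2*(j-1)) : ℕ) : ℕ∞) :=
            key_bound G hG C hsep x y z t hx hy hz hxt hd2 j hj1 hjc σ h0 h1 hCm hinj
        _ = ((G.dist x y : ℕ∞)) + ((max (G.dist z t - 2) 1 : ℕ) : ℕ∞)
              + (((S - 2*(j-1) : ℕ)) : ℕ∞) := by rw [Nat.cast_add, Nat.cast_add]
        _ = ((G.dist x y : ℕ∞) + rhoPrime G z t) + ((S : ℕ∞) - ((2*(j-1) : ℕ) : ℕ∞)) := by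
            rw [ENat.coe_sub, rhoPrime_cast]
    rw [show (∑ i ∈ Finset.range (j-1), ((G.dist (σ i) (σ (i+1)) : ℕ) : ℕ∞)) = (S : ℕ∞)
      from (Nat.cast_sum _ _).symm]
    calc rhoStar G C x t + 2 - ((G.dist x y : ℕ∞) + rhoPrime G z t) + ((2*(j-1) : ℕ) : ℕ∞)
        ≤ ((S : ℕ∞) - ((2*(j-1) : ℕ) : ℕ∞)) + ((2*(j-1) : ℕ) : ℕ∞) :=
          add_le_add_left (tsub_le_iff_left.mpr key2) _
      _ = (S : ℕ∞) := tsub_add_cancel_of_le (by exact_mod_cast hSc)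


end Intercept
end

section
/- The optimal separated broadcast ρ* satisfies the recursive (Bellman-type) characterization: for every colluding agent x ∈ C and every target t ∉ C, ρ*(x,t) = min( max(d(x,t) − 2, 1), min over y ∈ C with y ≠ x of (d(x,y) − 2 + ρ*(y,t)) ). -/
open SimpleGraph

namespace Intercept

variable {V : Type*}

lemma enat_exists_eq_iInf {ι : Sort*} [Nonempty ι] (f : ι → ℕ∞) : ∃ i, f i = ⨅ j, f j := by
  obtain ⟨i, hi⟩ := csInf_mem (Set.range_nonempty f)
  exact ⟨i, by rw [iInf, hi]⟩

lemma enat_iInf_prop_cases {ι : Sort*} [Nonempty ι] (p : ι → Prop) (f : ι → ℕ∞) :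
    (⨅ i, ⨅ (_ : p i), f i) = ⊤ ∨ ∃ i, p i ∧ (⨅ i, ⨅ (_ : p i), f i) = f i := by
  obtain ⟨i, hi⟩ := enat_exists_eq_iInf (fun i => ⨅ (_ : p i), f i)
  by_cases h : p i
  · exact Or.inr ⟨i, h, by rw [← hi, iInf_pos h]⟩
  · exact Or.inl (by rw [← hi, iInf_neg h])

lemma collDist_cases (G : SimpleGraph V) (C : Finset V) (j : ℕ) (x y : V) :
    collDist G C j x y = ⊤ ∨ ∃ σ : ℕ → V, (σ 0 = x ∧ σ (j - 1) = y ∧ (∀ i < j, σ i ∈ C) ∧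
      ∀ a < j, ∀ b < j, σ a = σ b → a = b) ∧
      collDist G C j x y = ∑ i ∈ Finset.range (j - 1), (G.dist (σ i) (σ (i + 1)) : ℕ∞) := by
  have : Nonempty (ℕ → V) := ⟨fun _ => x⟩
  unfold collDist
  exact enat_iInf_prop_cases _ _

lemma rhoPrime2_cases (G : SimpleGraph V) (C : Finset V) (x t : V) :
    rhoPrime2 G C x t = ⊤ ∨ ∃ y ∈ C, ∃ j ∈ Finset.Icc 1 C.card,
      rhoPrime2 G C x t = collDist G C j x y - ((2 * (j - 1) : ℕ) : ℕ∞) + rhoPrime G y t := by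
  have : Nonempty V := ⟨x⟩
  unfold rhoPrime2
  obtain h | ⟨y, hy, hEq⟩ := enat_iInf_prop_cases (· ∈ C)
      (fun y => ⨅ j ∈ Finset.Icc 1 C.card,
        (collDist G C j x y - ((2 * (j - 1) : ℕ) : ℕ∞) + rhoPrime G y t))
  · exact Or.inl h
  · rw [hEq]
    obtain h2 | ⟨j, hj, hEq2⟩ := enat_iInf_prop_cases (· ∈ Finset.Icc 1 C.card)
        (fun j => collDist G C j x y - ((2 * (j - 1) : ℕ) : ℕ∞) + rhoPrime G y t)
    · exact Or.inl h2
    · exact Or.inr ⟨y, hy, j, hj, hEq2⟩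

lemma collDist_le_sum (G : SimpleGraph V) (C : Finset V) (j : ℕ) (x y : V) (σ : ℕ → V)
    (h : σ 0 = x ∧ σ (j - 1) = y ∧ (∀ i < j, σ i ∈ C) ∧
      ∀ a < j, ∀ b < j, σ a = σ b → a = b) :
    collDist G C j x y ≤ ∑ i ∈ Finset.range (j - 1), (G.dist (σ i) (σ (i + 1)) : ℕ∞) :=
  iInf₂_le σ h

lemma rhoPrime2_le_term (G : SimpleGraph V) (C : Finset V) (x t y : V) (hy : y ∈ C)
    (j : ℕ) (hj : j ∈ Finset.Icc 1 C.card) :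
    rhoPrime2 G C x t ≤ collDist G C j x y - ((2 * (j - 1) : ℕ) : ℕ∞) + rhoPrime G y t := by
  calc rhoPrime2 G C x t ≤ ⨅ j ∈ Finset.Icc 1 C.card,
        (collDist G C j x y - ((2 * (j - 1) : ℕ) : ℕ∞) + rhoPrime G y t) := iInf₂_le y hy
    _ ≤ _ := iInf₂_le j hj

lemma collDist_one_self (G : SimpleGraph V) (C : Finset V) {x : V} (hx : x ∈ C) :
    collDist G C 1 x x = 0 := by
  refine le_antisymm ?_ (zero_le)
  have := collDist_le_sum G C 1 x x (fun _ => x)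
    ⟨rfl, rfl, fun i _ => hx, fun a ha b hb _ => by omega⟩
  simpa using this

lemma two_le_dist {G : SimpleGraph V} (hG : G.Connected) {C : Finset V}
    (hsep : ∀ x ∈ C, ∀ y ∈ C, ¬ G.Adj x y) {x y : V} (hx : x ∈ C) (hy : y ∈ C)
    (hxy : x ≠ y) : 2 ≤ G.dist x y := by
  have h1 : 0 < G.dist x y := hG.pos_dist_of_ne hxy
  have h2 : G.dist x y ≠ 1 := fun h => hsep x hx y hy (SimpleGraph.dist_eq_one_iff_adj.mp h)
  omega

lemma sum_dist_ge {G : SimpleGraph V} (hG : G.Connected) {C : Finset V}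
    (hsep : ∀ x ∈ C, ∀ y ∈ C, ¬ G.Adj x y) {σ : ℕ → V} {j : ℕ}
    (hmem : ∀ i < j, σ i ∈ C) (hinj : ∀ a < j, ∀ b < j, σ a = σ b → a = b) :
    2 * (j - 1) ≤ ∑ i ∈ Finset.range (j - 1), G.dist (σ i) (σ (i + 1)) := by
  calc 2 * (j - 1) = ∑ _i ∈ Finset.range (j - 1), 2 := by
        rw [Finset.sum_const, smul_eq_mul, mul_comm, Finset.card_range]
    _ ≤ _ := by
        refine Finset.sum_le_sum fun i hi => ?_
        rw [Finset.mem_range] at hi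
        exact two_le_dist hG hsep (hmem i (by omega)) (hmem (i+1) (by omega))
          (fun h => by have := hinj i (by omega) (i+1) (by omega) h; omega)

lemma enat_arith1 (W c d S e : ℕ) (ρ : ℕ∞) (h : W - c ≤ (d - 2) + (S - e)) :
    (W:ℕ∞) - (c:ℕ∞) + ρ ≤ (d:ℕ∞) - 2 + ((S:ℕ∞) - (e:ℕ∞) + ρ) := by
  have h2 : ((W - c : ℕ) : ℕ∞) + ρ ≤ (((d-2) + (S-e) : ℕ) : ℕ∞) + ρ :=
    add_le_add_left (by exact_mod_cast h) ρ
  calc (W:ℕ∞) - (c:ℕ∞) + ρ = ((W - c : ℕ) : ℕ∞) + ρ := by rw [ENat.coe_sub]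
    _ ≤ (((d-2) + (S-e) : ℕ) : ℕ∞) + ρ := h2
    _ = (d:ℕ∞) - 2 + ((S:ℕ∞) - (e:ℕ∞) + ρ) := by
        rw [Nat.cast_add, ENat.coe_sub, ENat.coe_sub, Nat.cast_ofNat, add_assoc]

lemma enat_arith2 (d T c S e : ℕ) (ρ : ℕ∞) (h : (d - 2) + (T - c) ≤ S - e) :
    (d:ℕ∞) - 2 + ((T:ℕ∞) - (c:ℕ∞) + ρ) ≤ (S:ℕ∞) - (e:ℕ∞) + ρ := by
  have h2 : (((d-2) + (T-c) : ℕ) : ℕ∞) + ρ ≤ ((S - e : ℕ) : ℕ∞) + ρ :=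
    add_le_add_left (by exact_mod_cast h) ρ
  calc (d:ℕ∞) - 2 + ((T:ℕ∞) - (c:ℕ∞) + ρ)
      = (((d-2) + (T-c) : ℕ) : ℕ∞) + ρ := by
        rw [Nat.cast_add, ENat.coe_sub, ENat.coe_sub, Nat.cast_ofNat, add_assoc]
    _ ≤ ((S - e : ℕ) : ℕ∞) + ρ := h2
    _ = (S:ℕ∞) - (e:ℕ∞) + ρ := by rw [ENat.coe_sub]

/-- key1 : `ρ'' (x,t) ≤ d(x,y) - 2 + ρ*(y,t)` for `y ∈ C.erase x`. -/
lemma key1 [DecidableEq V] (G : SimpleGraph V) (hG : G.Connected) (C : Finset V)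
    (hsep : ∀ x ∈ C, ∀ y ∈ C, ¬ G.Adj x y) (x : V) (hx : x ∈ C) (t : V) (ht : t ∉ C)
    (y : V) (hy : y ∈ C.erase x) :
    rhoPrime2 G C x t ≤ (G.dist x y : ℕ∞) - 2 + rhoStar G C y t := by
  obtain ⟨hyx, hyC⟩ := Finset.mem_erase.mp hy
  have hyt : y ≠ t := fun h => ht (h ▸ hyC)
  have hd2 : 2 ≤ G.dist x y := two_le_dist hG hsep hx hyC hyx.symm
  have hstar : rhoStar G C y t = min (rhoPrime G y t) (rhoPrime2 G C y t) := if_neg hyt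
  rw [hstar]
  rcases le_total (rhoPrime G y t) (rhoPrime2 G C y t) with hc | hc
  · rw [min_eq_left hc]
    have h2C : 2 ≤ C.card := Finset.one_lt_card.mpr ⟨x, hx, y, hyC, hyx.symm⟩
    refine (rhoPrime2_le_term G C x t y hyC 2
      (Finset.mem_Icc.mpr ⟨one_le_two, h2C⟩)).trans ?_
    have hc2 : collDist G C 2 x y ≤ (G.dist x y : ℕ∞) := by
      have := collDist_le_sum G C 2 x y (fun i => if i = 0 then x else y)
        ⟨rfl, rfl, fun i hi => by rcases i with _ | i <;> simp [hx, hyC],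
         fun a ha b hb hab => by
          interval_cases a <;> interval_cases b <;> simp_all⟩
      simpa using this
    have : ((2 * (2 - 1) : ℕ) : ℕ∞) = 2 := by norm_num
    rw [this]
    exact add_le_add_left (tsub_le_tsub_right hc2 2) _
  · rw [min_eq_right hc]
    rcases rhoPrime2_cases G C y t with htop | ⟨z, hzC, j, hj, hEq⟩
    · rw [htop, add_top]; exact le_top
    rw [hEq]
    obtain ⟨hj1, hjC⟩ := Finset.mem_Icc.mp hj
    rcases collDist_cases G C j y z with hct | ⟨σ, ⟨h0, hlast, hmem, hinj⟩, hcEq⟩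
    · rw [hct, ENat.top_sub_coe, top_add, add_top]; exact le_top
    rw [hcEq]
    set f : ℕ → ℕ := fun i => G.dist (σ i) (σ (i + 1)) with hf
    have hsumcast : ∑ i ∈ Finset.range (j - 1), (G.dist (σ i) (σ (i + 1)) : ℕ∞)
        = ((∑ i ∈ Finset.range (j - 1), f i : ℕ) : ℕ∞) := (Nat.cast_sum _ _).symm
    rw [hsumcast]
    set S : ℕ := ∑ i ∈ Finset.range (j - 1), f i with hSdef
    have hS_ge : 2 * (j - 1) ≤ S := sum_dist_ge hG hsep hmem hinj
    by_cases hxσ : ∃ i, i < j ∧ σ i = x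
    · -- x occurs in σ : take the tail from x
      obtain ⟨i, hij, hix⟩ := hxσ
      have hi1 : 1 ≤ i := by
        rcases Nat.eq_zero_or_pos i with h | h
        · exfalso; apply hyx; rw [← h0, ← hix, h]
        · omega
      -- tail sequence
      have hτvalid : (fun m => σ (i + m)) 0 = x ∧ (fun m => σ (i + m)) ((j - i) - 1) = z ∧
          (∀ m < j - i, (fun m => σ (i + m)) m ∈ C) ∧
          ∀ a < j - i, ∀ b < j - i, (fun m => σ (i + m)) a = (fun m => σ (i + m)) b → a = b := by
        refine ⟨by simpa using hix, ?_, fun m hm => hmem _ (by omega),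
          fun a ha b hb hab => by
            have := hinj (i+a) (by omega) (i+b) (by omega) hab; omega⟩
        show σ (i + ((j - i) - 1)) = z
        rw [show i + ((j - i) - 1) = j - 1 by omega]; exact hlast
      have hcoll := collDist_le_sum G C (j - i) x z (fun m => σ (i + m)) hτvalid
      set T : ℕ := ∑ m ∈ Finset.range ((j - i) - 1), f (i + m) with hTdef
      have hcoll2 : collDist G C (j - i) x z ≤ (T : ℕ∞) := by
        refine hcoll.trans_eq ?_
        rw [hTdef, Nat.cast_sum]
        exact Finset.sum_congr rfl fun m _ => by simp only [hf, add_assoc]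
      -- T is a subsum of S
      have hTS : T + 2 * i ≤ S := by
        have h1 : ∑ m ∈ Finset.range i, f m + ∑ m ∈ Finset.Ico i (j - 1), f m = S :=
          Finset.sum_range_add_sum_Ico f (by omega)
        have h2 : ∑ m ∈ Finset.Ico i (j - 1), f m
            = ∑ m ∈ Finset.range ((j - 1) - i), f (i + m) := by
          rw [Finset.sum_Ico_eq_sum_range]
        have h3 : (j - 1) - i = (j - i) - 1 := by omega
        have h4 : 2 * i ≤ ∑ m ∈ Finset.range i, f m := by
          calc 2 * i = ∑ _m ∈ Finset.range i, 2 := by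
                rw [Finset.sum_const, smul_eq_mul, mul_comm, Finset.card_range]
            _ ≤ _ := by
                refine Finset.sum_le_sum fun m hm => ?_
                rw [Finset.mem_range] at hm
                exact two_le_dist hG hsep (hmem m (by omega)) (hmem (m+1) (by omega))
                  (fun h => by have := hinj m (by omega) (m+1) (by omega) h; omega)
        rw [hTdef, ← h3, ← h2]
        omega
      have hterm := rhoPrime2_le_term G C x t z hzC (j - i)
        (Finset.mem_Icc.mpr ⟨by omega, by omega⟩)
      refine hterm.trans ?_
      refine le_trans (add_le_add_left (tsub_le_tsub_right hcoll2 _) _) ?_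
      exact enat_arith1 T (2 * ((j - i) - 1)) (G.dist x y) S (2 * (j - 1)) _ (by omega)
    · -- x does not occur : prepend x
      push_neg at hxσ
      have hinjx : ∀ i < j, σ i ≠ x := fun i hi => hxσ i hi
      -- card bound : j + 1 ≤ C.card
      have hcard : j + 1 ≤ C.card := by
        have hsub : insert x ((Finset.range j).image σ) ⊆ C := by
          intro a ha
          rcases Finset.mem_insert.mp ha with rfl | ha
          · exact hx
          · obtain ⟨i, hi, rfl⟩ := Finset.mem_image.mp ha
            exact hmem i (Finset.mem_range.mp hi)
        have himg : ((Finset.range j).image σ).card = j := by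
          rw [Finset.card_image_of_injOn, Finset.card_range]
          intro a ha b hb hab
          exact hinj a (Finset.mem_range.mp ha) b (Finset.mem_range.mp hb) hab
        have hnot : x ∉ (Finset.range j).image σ := by
          intro h
          obtain ⟨i, hi, hix⟩ := Finset.mem_image.mp h
          exact hinjx i (Finset.mem_range.mp hi) hix
        have := Finset.card_le_card hsub
        rw [Finset.card_insert_of_notMem hnot, himg] at this
        omega
      -- prepended sequence
      set τ : ℕ → V := fun m => if m = 0 then x else σ (m - 1) with hτ
      have hτvalid : τ 0 = x ∧ τ ((j + 1) - 1) = z ∧ (∀ m < j + 1, τ m ∈ C) ∧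
          ∀ a < j + 1, ∀ b < j + 1, τ a = τ b → a = b := by
        refine ⟨rfl, ?_, ?_, ?_⟩
        · show τ j = z
          rw [hτ]; simp only [if_neg (by omega : j ≠ 0)]
          exact hlast
        · intro m hm
          rcases Nat.eq_zero_or_pos m with rfl | h
          · simpa [hτ] using hx
          · rw [hτ]; simp only [if_neg (by omega : m ≠ 0)]
            exact hmem (m - 1) (by omega)
        · intro a ha b hb hab
          rcases Nat.eq_zero_or_pos a with rfl | ha1 <;>
            rcases Nat.eq_zero_or_pos b with rfl | hb1
          · rfl
          · exfalso
            rw [hτ] at hab; simp only [if_pos rfl, if_neg (by omega : b ≠ 0)] at hab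
            exact hinjx (b - 1) (by omega) hab.symm
          · exfalso
            rw [hτ] at hab; simp only [if_pos rfl, if_neg (by omega : a ≠ 0)] at hab
            exact hinjx (a - 1) (by omega) hab
          · rw [hτ] at hab
            simp only [if_neg (by omega : a ≠ 0), if_neg (by omega : b ≠ 0)] at hab
            have := hinj (a - 1) (by omega) (b - 1) (by omega) hab
            omega
      have hcoll := collDist_le_sum G C (j + 1) x z τ hτvalid
      -- compute the prepended sum
      have hsum : ∑ m ∈ Finset.range ((j + 1) - 1), (G.dist (τ m) (τ (m + 1)) : ℕ∞)
          = ((G.dist x y + S : ℕ) : ℕ∞) := by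
        have : ((j + 1) - 1) = (j - 1) + 1 := by omega
        rw [this, Finset.sum_range_succ' (fun m => (G.dist (τ m) (τ (m + 1)) : ℕ∞)) (j - 1)]
        have ht0 : (G.dist (τ 0) (τ 1) : ℕ∞) = (G.dist x y : ℕ∞) := by
          rw [hτ]; simp only [if_pos rfl, if_neg (by omega : (1:ℕ) ≠ 0)]
          norm_num
          rw [h0]
        have hti : ∀ m, (G.dist (τ (m + 1)) (τ (m + 1 + 1)) : ℕ∞)
            = (G.dist (σ m) (σ (m + 1)) : ℕ∞) := by
          intro m
          rw [hτ]
          simp only [if_neg (by omega : m + 1 ≠ 0), if_neg (by omega : m + 1 + 1 ≠ 0)]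
          norm_num
        rw [ht0]
        have : ∑ m ∈ Finset.range (j - 1), (G.dist (τ (m + 1)) (τ (m + 1 + 1)) : ℕ∞)
            = ((S : ℕ) : ℕ∞) := by
          rw [hSdef, Nat.cast_sum]
          exact Finset.sum_congr rfl fun m _ => hti m
        rw [this, Nat.cast_add, add_comm]
      have hterm := rhoPrime2_le_term G C x t z hzC (j + 1)
        (Finset.mem_Icc.mpr ⟨by omega, hcard⟩)
      refine hterm.trans ?_
      refine le_trans (add_le_add_left
        (tsub_le_tsub_right (hcoll.trans_eq hsum) _) _) ?_
      exact enat_arith1 (G.dist x y + S) (2 * ((j + 1) - 1)) (G.dist x y) S (2 * (j - 1)) _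
        (by omega)

/-- key2 : `min ρ' R ≤` every term of `ρ''(x,t)`. -/
lemma key2 [DecidableEq V] (G : SimpleGraph V) (hG : G.Connected) (C : Finset V)
    (hsep : ∀ x ∈ C, ∀ y ∈ C, ¬ G.Adj x y) (x : V) (hx : x ∈ C) (t : V) (ht : t ∉ C)
    (y : V) (hyC : y ∈ C) (j : ℕ) (hj : j ∈ Finset.Icc 1 C.card) :
    min (rhoPrime G x t) (⨅ y ∈ C.erase x, ((G.dist x y : ℕ∞) - 2 + rhoStar G C y t))
      ≤ collDist G C j x y - ((2 * (j - 1) : ℕ) : ℕ∞) + rhoPrime G y t := by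
  obtain ⟨hj1, hjC⟩ := Finset.mem_Icc.mp hj
  rcases collDist_cases G C j x y with htop | ⟨σ, ⟨h0, hlast, hmem, hinj⟩, hEq⟩
  · rw [htop, ENat.top_sub_coe, top_add]; exact le_top
  rw [hEq]
  rcases eq_or_lt_of_le hj1 with hj1' | hj2
  · -- j = 1
    subst hj1'
    have hxy : y = x := by rw [← h0, ← hlast]
    subst hxy
    simp only [show (1:ℕ) - 1 = 0 from rfl, Finset.range_zero, Finset.sum_empty,
      Nat.mul_zero, Nat.cast_zero, tsub_zero, zero_add]
    exact min_le_left _ _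
  · -- j ≥ 2
    have h1j : 1 < j := hj2
    have hzC : σ 1 ∈ C := hmem 1 h1j
    have hzx : σ 1 ≠ x := by
      intro h
      have := hinj 1 h1j 0 (by omega) (by rw [h, h0])
      omega
    have hzt : σ 1 ≠ t := fun h => ht (h ▸ hzC)
    have hd2 : 2 ≤ G.dist x (σ 1) := two_le_dist hG hsep hx hzC (Ne.symm hzx)
    set f : ℕ → ℕ := fun i => G.dist (σ i) (σ (i + 1)) with hf
    set S : ℕ := ∑ i ∈ Finset.range (j - 1), f i with hSdef
    have hsumcast : ∑ i ∈ Finset.range (j - 1), (G.dist (σ i) (σ (i + 1)) : ℕ∞)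
        = ((S : ℕ) : ℕ∞) := (Nat.cast_sum _ _).symm
    rw [hsumcast]
    -- the tail from σ 1
    have hτvalid : (fun m => σ (m + 1)) 0 = σ 1 ∧
        (fun m => σ (m + 1)) ((j - 1) - 1) = y ∧
        (∀ m < j - 1, (fun m => σ (m + 1)) m ∈ C) ∧
        ∀ a < j - 1, ∀ b < j - 1, (fun m => σ (m + 1)) a = (fun m => σ (m + 1)) b → a = b := by
      refine ⟨rfl, ?_, fun m hm => hmem _ (by omega),
        fun a ha b hb hab => by
          have := hinj (a + 1) (by omega) (b + 1) (by omega) hab; omega⟩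
      show σ ((j - 1 - 1) + 1) = y
      rw [show (j - 1 - 1) + 1 = j - 1 by omega]; exact hlast
    have hcoll := collDist_le_sum G C (j - 1) (σ 1) y (fun m => σ (m + 1)) hτvalid
    set T : ℕ := ∑ m ∈ Finset.range ((j - 1) - 1), f (m + 1) with hTdef
    have hcoll2 : collDist G C (j - 1) (σ 1) y ≤ (T : ℕ∞) := by
      refine hcoll.trans_eq ?_
      rw [hTdef, Nat.cast_sum]
    have hT_ge : 2 * ((j - 1) - 1) ≤ T := by
      calc 2 * ((j - 1) - 1) = ∑ _m ∈ Finset.range ((j - 1) - 1), 2 := by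
            rw [Finset.sum_const, smul_eq_mul, mul_comm, Finset.card_range]
        _ ≤ _ := by
            refine Finset.sum_le_sum fun m hm => ?_
            rw [Finset.mem_range] at hm
            exact two_le_dist hG hsep (hmem (m+1) (by omega)) (hmem (m+1+1) (by omega))
              (fun h => by have := hinj (m+1) (by omega) (m+1+1) (by omega) h; omega)
    have hSsplit : S = T + f 0 := by
      rw [hSdef, hTdef]
      conv_lhs => rw [show j - 1 = ((j - 1) - 1) + 1 by omega]
      exact Finset.sum_range_succ' f ((j - 1) - 1)
    have hf0 : f 0 = G.dist x (σ 1) := by rw [hf]; simp only [zero_add]; rw [h0]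
    -- chain
    calc min (rhoPrime G x t) (⨅ y ∈ C.erase x, ((G.dist x y : ℕ∞) - 2 + rhoStar G C y t))
        ≤ ⨅ y ∈ C.erase x, ((G.dist x y : ℕ∞) - 2 + rhoStar G C y t) := min_le_right _ _
      _ ≤ (G.dist x (σ 1) : ℕ∞) - 2 + rhoStar G C (σ 1) t :=
          iInf₂_le (σ 1) (Finset.mem_erase.mpr ⟨hzx, hzC⟩)
      _ ≤ (G.dist x (σ 1) : ℕ∞) - 2 + rhoPrime2 G C (σ 1) t := by
          refine add_le_add_right ?_ _
          have hstar : rhoStar G C (σ 1) t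
              = min (rhoPrime G (σ 1) t) (rhoPrime2 G C (σ 1) t) := if_neg hzt
          rw [hstar]; exact min_le_right _ _
      _ ≤ (G.dist x (σ 1) : ℕ∞) - 2 +
          (collDist G C (j - 1) (σ 1) y - ((2 * ((j - 1) - 1) : ℕ) : ℕ∞) + rhoPrime G y t) :=
          add_le_add_right (rhoPrime2_le_term G C (σ 1) t y hyC (j - 1)
            (Finset.mem_Icc.mpr ⟨by omega, by omega⟩)) _
      _ ≤ (G.dist x (σ 1) : ℕ∞) - 2 +
          ((T : ℕ∞) - ((2 * ((j - 1) - 1) : ℕ) : ℕ∞) + rhoPrime G y t) :=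
          add_le_add_right (add_le_add_left (tsub_le_tsub_right hcoll2 _) _) _
      _ ≤ ((S : ℕ) : ℕ∞) - ((2 * (j - 1) : ℕ) : ℕ∞) + rhoPrime G y t :=
          enat_arith2 (G.dist x (σ 1)) T (2 * ((j - 1) - 1)) S (2 * (j - 1)) _ (by omega)

/-- Bellman-type characterization of the optimal separated
broadcast: for every colluding agent `x ∈ C` and target `t ∉ C`,
`ρ*(x,t) = min (max (d(x,t)-2) 1) (min over y ∈ C, y ≠ x of (d(x,y) - 2 + ρ*(y,t)))`. -/
theorem rhoStar_bellman [Fintype V] [DecidableEq V] (G : SimpleGraph V)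
    (hG : G.Connected) (C : Finset V)
    (hsep : ∀ x ∈ C, ∀ y ∈ C, ¬ G.Adj x y)
    (x : V) (hx : x ∈ C) (t : V) (ht : t ∉ C) :
    rhoStar G C x t =
      min (rhoPrime G x t)
        (⨅ y ∈ C.erase x, ((G.dist x y : ℕ∞) - 2 + rhoStar G C y t)) := by
  have hxt : x ≠ t := fun h => ht (h ▸ hx)
  have hstar : rhoStar G C x t = min (rhoPrime G x t) (rhoPrime2 G C x t) := if_neg hxt
  rw [hstar]
  apply le_antisymm
  · refine le_min (min_le_left _ _) (le_iInf₂ fun y hy => ?_)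
    exact (min_le_right _ _).trans (key1 G hG C hsep x hx t ht y hy)
  · refine le_min (min_le_left _ _) ?_
    show _ ≤ rhoPrime2 G C x t
    unfold rhoPrime2
    exact le_iInf₂ fun y hy => le_iInf₂ fun j hj => key2 G hG C hsep x hx t ht y hy j hj



end Intercept
end
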